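/- arXiv:1607.04546 — 5 statements merged into one kernel-verified Lean document; each statement's English description precedes it below -/
import Mathlib

section
/- If {P_1, …, P_n} is an (n,l,m)-fusion frame over 𝔽 with n ≥ 2 and 0 < l < m, then max_{j≠k} tr(P_j P_k) ≥ (n·l² − m·l)/(m(n−1)). Moreover, if equality is achieved, then tr(P_j P_k) takes the same value for every pair j ≠ k (the fusion frame is equiangular) and n ≤ d_𝔽(m) + 1. -/
/-!
Put `S = ∑ j, P j`. Then `tr S = n l`, and Cauchy–Schwarz on the diagonal of the Hermitian
matrix `S` gives `(n l)² ≤ m · tr (S²)`. Expanding, `tr (S²) = n l + ∑_{j ≠ k} tr (P j * P k)`,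
so the off-diagonal traces average at least the bound: one of them reaches it, and if none
exceeds it they are all equal to it. In that equiangular case the Gram matrix of the `P j` for
the real inner product `re tr (A * B)` is `(l - c) I + c J` with `l - c > 0` and
`l + (n - 1) c = n l² / m > 0`, so the `P j` are linearly independent in the real space of
Hermitian `m × m` matrices, whose dimension is `d_𝔽(m) + 1`.
-/

open Matrix

noncomputable section

variable {𝕜 : Type*} [RCLike 𝕜]

/-- An `(n,l,m)`-fusion frame: a family of rank-`l` orthogonal projections on `𝕜^m`
satisfying the frame inequality. -/
def IsFusionFrame {ι : Type*} [Fintype ι] {m : ℕ} (l : ℕ)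
    (P : ι → Matrix (Fin m) (Fin m) 𝕜) : Prop :=
  (∀ j, (P j).IsHermitian) ∧ (∀ j, P j * P j = P j) ∧ (∀ j, (P j).rank = l) ∧
  ∃ A B : ℝ, 0 < A ∧ A ≤ B ∧ ∀ x : Fin m → 𝕜,
    A * ∑ i, ‖x i‖ ^ 2 ≤ ∑ j, ∑ i, ‖(P j).mulVec x i‖ ^ 2 ∧
    ∑ j, ∑ i, ‖(P j).mulVec x i‖ ^ 2 ≤ B * ∑ i, ‖x i‖ ^ 2

open scoped Classical in
/-- `d_𝔽(m)`: `(m+2)(m-1)/2` in the real case, `m² - 1` in the complex case. -/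
noncomputable def dF (𝕜 : Type*) [RCLike 𝕜] (m : ℕ) : ℕ :=
  if (RCLike.I : 𝕜) = 0 then (m + 2) * (m - 1) / 2 else m ^ 2 - 1

theorem Matrix.trace_eq_rank_of_isIdempotentElem {n K : Type*} [Fintype n] [DecidableEq n]
    [Field K] {A : Matrix n n K} (hA : IsIdempotentElem A) : A.trace = A.rank := by
  have hA' : IsIdempotentElem (toLin' A) := hA.map toLinAlgEquiv'
  rw [← trace_toLin'_eq, ((LinearMap.isProj_range_iff_isIdempotentElem _).2 hA').trace, rank,
    toLin'_apply']

theorem Matrix.re_trace_mul_self_of_isIdempotentElem {n : Type*} [Fintype n] [DecidableEq n]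
    {A : Matrix n n 𝕜} (hA : IsIdempotentElem A) : RCLike.re (A * A).trace = A.rank := by
  rw [hA.eq, trace_eq_rank_of_isIdempotentElem hA, RCLike.natCast_re]

theorem Matrix.IsHermitian.re_trace_mul_self {n : Type*} [Fintype n] {A : Matrix n n 𝕜}
    (hA : A.IsHermitian) : RCLike.re (A * A).trace = ∑ i, ∑ j, ‖A i j‖ ^ 2 := by
  simp only [trace, diag_apply, mul_apply, map_sum]
  refine Finset.sum_congr rfl fun i _ => Finset.sum_congr rfl fun j _ => ?_
  rw [← hA.apply j i, RCLike.star_def, RCLike.mul_conj, ← RCLike.ofReal_pow, RCLike.ofReal_re]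

theorem Matrix.IsHermitian.sq_re_trace_le {n : Type*} [Fintype n] {A : Matrix n n 𝕜}
    (hA : A.IsHermitian) : RCLike.re A.trace ^ 2 ≤ Fintype.card n * RCLike.re (A * A).trace := by
  have hdiag : ∑ i, RCLike.re (A i i) ^ 2 ≤ ∑ i, ∑ j, ‖A i j‖ ^ 2 :=
    Finset.sum_le_sum fun i _ =>
      (sq_le_sq' (abs_le.1 (RCLike.abs_re_le_norm _)).1 (RCLike.re_le_norm _)).trans <|
        Finset.single_le_sum (f := fun j => ‖A i j‖ ^ 2) (fun _ _ => by positivity)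
          (Finset.mem_univ i)
  calc RCLike.re A.trace ^ 2 = (∑ i, RCLike.re (A i i)) ^ 2 := by simp [trace]
    _ ≤ Fintype.card n * ∑ i, RCLike.re (A i i) ^ 2 := sq_sum_le_card_mul_sum_sq
    _ ≤ Fintype.card n * RCLike.re (A * A).trace := by rw [hA.re_trace_mul_self]; gcongr

theorem Finset.sum_sum_eq_sum_add_sum_offDiag {ι M : Type*} [Fintype ι] [DecidableEq ι]
    [AddCommMonoid M] (f : ι → ι → M) :
    ∑ j, ∑ k, f j k = ∑ j, f j j + ∑ p ∈ univ.offDiag, f p.1 p.2 := by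
  rw [← sum_product' univ univ f, ← diag_union_offDiag, sum_union (disjoint_diag_offDiag _),
    sum_diag]

theorem sq_card_mul_rank_le_mul_sum_offDiag {ι : Type*} [Fintype ι] [DecidableEq ι] {m l : ℕ}
    {P : ι → Matrix (Fin m) (Fin m) 𝕜} (hherm : ∀ j, (P j).IsHermitian)
    (hidem : ∀ j, IsIdempotentElem (P j)) (hrank : ∀ j, (P j).rank = l) :
    ((Fintype.card ι : ℝ) * l) ^ 2 ≤
      m * (Fintype.card ι * l + ∑ p ∈ Finset.univ.offDiag, RCLike.re (P p.1 * P p.2).trace) := by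
  have htr : ∀ j, RCLike.re (P j).trace = l := fun j => by
    rw [trace_eq_rank_of_isIdempotentElem (hidem j), hrank j, RCLike.natCast_re]
  have hS : (∑ j, P j).IsHermitian := isSelfAdjoint_sum _ fun j _ => hherm j
  have hSS : RCLike.re ((∑ j, P j) * ∑ j, P j).trace =
      Fintype.card ι * l + ∑ p ∈ Finset.univ.offDiag, RCLike.re (P p.1 * P p.2).trace := by
    simp only [Finset.sum_mul_sum, trace_sum, map_sum]
    rw [Finset.sum_sum_eq_sum_add_sum_offDiag]
    simp [re_trace_mul_self_of_isIdempotentElem (hidem _), hrank]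
  simpa [trace_sum, htr, hSS] using hS.sq_re_trace_le

/-- The Conway–Hardin–Sloane simplex bound for `n` subspaces of dimension `l` of `𝕜^m`,
expressed through `tr (P j * P k) = l - (chordal distance)²`. -/
def simplexBound (n l m : ℝ) : ℝ := (n * l ^ 2 - m * l) / (m * (n - 1))

theorem simplexBound_lt {n l m : ℝ} (hn : 1 < n) (hl : 0 < l) (hlm : l < m) :
    simplexBound n l m < l := by
  have hm : 0 < m := hl.trans hlm
  rw [simplexBound, div_lt_iff₀ (mul_pos hm (sub_pos.2 hn))]
  nlinarith [mul_pos (mul_pos hl (by linarith : 0 < n)) (sub_pos.2 hlm)]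

theorem add_mul_simplexBound {n l m : ℝ} (hn : n ≠ 1) (hm : m ≠ 0) :
    l + (n - 1) * simplexBound n l m = n * l ^ 2 / m := by
  have : n - 1 ≠ 0 := sub_ne_zero.2 hn
  rw [simplexBound]
  field_simp
  ring

theorem sum_offDiag_simplexBound_le {ι : Type*} [Fintype ι] [DecidableEq ι] {m l : ℕ}
    (hι : 1 < Fintype.card ι) (hm : 0 < m) {P : ι → Matrix (Fin m) (Fin m) 𝕜}
    (hherm : ∀ j, (P j).IsHermitian) (hidem : ∀ j, IsIdempotentElem (P j))
    (hrank : ∀ j, (P j).rank = l) :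
    ∑ _p ∈ (Finset.univ.offDiag : Finset (ι × ι)), simplexBound (Fintype.card ι) l m ≤
      ∑ p ∈ Finset.univ.offDiag, RCLike.re (P p.1 * P p.2).trace := by
  set n := Fintype.card ι
  have hm' : (0 : ℝ) < m := by exact_mod_cast hm
  have hoff : ((n * n - n : ℕ) : ℝ) * simplexBound n l m = (n * l) ^ 2 / m - n * l := by
    have hn1 : (n : ℝ) ≠ 1 := by exact_mod_cast hι.ne'
    rw [Nat.cast_sub (Nat.le_mul_self n), Nat.cast_mul,
      show ((n : ℝ) * n - n) * simplexBound n l m = n * ((l + (n - 1) * simplexBound n l m) - l)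
        by ring, add_mul_simplexBound hn1 hm'.ne']
    ring
  rw [Finset.sum_const, Finset.offDiag_card, Finset.card_univ, nsmul_eq_mul, hoff,
    sub_le_iff_le_add, div_le_iff₀ hm']
  linarith [sq_card_mul_rank_le_mul_sum_offDiag hherm hidem hrank]

theorem linearIndependent_of_dual_apply_eq_ite {ι K M : Type*} [Fintype ι] [DecidableEq ι]
    [Field K] [AddCommGroup M] [Module K M] {v : ι → M} (φ : ι → Module.Dual K M) {a c : K}
    (hφ : ∀ j k, φ k (v j) = if j = k then a else c) (hac : a ≠ c)
    (hsum : a + (Fintype.card ι - 1) * c ≠ 0) :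
    LinearIndependent K v := by
  rw [Fintype.linearIndependent_iff]
  intro g hg
  have hk : ∀ k, g k * (a - c) + (∑ j, g j) * c = 0 := fun k => by
    have h := congrArg (φ k) hg
    simp only [map_sum, map_smul, hφ, smul_eq_mul, map_zero, mul_ite] at h
    rw [← h, Finset.sum_mul]
    calc g k * (a - c) + ∑ j, g j * c
        = ∑ j, (g j * c + if j = k then g j * (a - c) else 0) := by
          rw [Finset.sum_add_distrib, Finset.sum_ite_eq', if_pos (Finset.mem_univ k), add_comm]
      _ = _ := Finset.sum_congr rfl fun j _ => by split_ifs <;> ring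
  have htotal : (∑ j, g j) * (a + (Fintype.card ι - 1) * c) = 0 := by
    have := Finset.sum_eq_zero (s := Finset.univ) fun k _ => hk k
    rw [Finset.sum_add_distrib, ← Finset.sum_mul, Finset.sum_const, Finset.card_univ,
      nsmul_eq_mul] at this
    linear_combination this
  have hzero : ∑ j, g j = 0 := (mul_eq_zero.1 htotal).resolve_right hsum
  intro k
  simpa [hzero, sub_ne_zero.2 hac] using hk k

theorem linearIndependent_of_re_trace_mul_eq_ite {ι n : Type*} [Fintype ι] [DecidableEq ι]
    [Fintype n] {P : ι → Matrix n n 𝕜} {a c : ℝ}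
    (hdiag : ∀ j, RCLike.re (P j * P j).trace = a)
    (hoff : ∀ j k, j ≠ k → RCLike.re (P j * P k).trace = c) (hac : a ≠ c)
    (hsum : a + (Fintype.card ι - 1) * c ≠ 0) :
    LinearIndependent ℝ P := by
  refine linearIndependent_of_dual_apply_eq_ite
    (fun k => RCLike.reLm ∘ₗ traceLinearMap n ℝ 𝕜 ∘ₗ LinearMap.mulRight ℝ (P k))
    (fun j k => ?_) hac hsum
  split_ifs with hjk
  · subst hjk; exact hdiag j
  · exact hoff j k hjk

theorem Matrix.IsHermitian.eq_zero_of_forall_le {n α : Type*} [LinearOrder n]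
    [AddMonoid α] [StarAddMonoid α] {A : Matrix n n α} (hA : A.IsHermitian)
    (h : ∀ i j, i ≤ j → A i j = 0) : A = 0 := by
  ext i j
  rcases le_total i j with hij | hji
  · exact h i j hij
  · rw [← hA.apply i j, h j i hji, star_zero, zero_apply]

variable (𝕜) in
def upperRe (m : ℕ) : Matrix (Fin m) (Fin m) 𝕜 →ₗ[ℝ] ({p : Fin m × Fin m // p.1 ≤ p.2} → ℝ) :=
  LinearMap.pi fun p => RCLike.reLm ∘ₗ entryLinearMap ℝ 𝕜 p.1.1 p.1.2

variable (𝕜) in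
def upperReLowerIm (m : ℕ) : Matrix (Fin m) (Fin m) 𝕜 →ₗ[ℝ] (Fin m × Fin m → ℝ) :=
  LinearMap.pi fun p => if p.1 ≤ p.2 then RCLike.reLm ∘ₗ entryLinearMap ℝ 𝕜 p.1 p.2
    else RCLike.imLm ∘ₗ entryLinearMap ℝ 𝕜 p.2 p.1

theorem upperRe_eq_zero_iff {m : ℕ} (hI : (RCLike.I : 𝕜) = 0) {A : Matrix (Fin m) (Fin m) 𝕜}
    (hA : A.IsHermitian) : upperRe 𝕜 m A = 0 ↔ A = 0 := by
  refine ⟨fun h => hA.eq_zero_of_forall_le fun i j hij => ?_, fun h => by rw [h, map_zero]⟩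
  have hre : RCLike.re (A i j) = 0 := congrFun h ⟨(i, j), hij⟩
  exact RCLike.ext (by simpa using hre) (by simp [RCLike.im_eq_zero hI])

theorem upperReLowerIm_eq_zero_iff {m : ℕ} {A : Matrix (Fin m) (Fin m) 𝕜}
    (hA : A.IsHermitian) : upperReLowerIm 𝕜 m A = 0 ↔ A = 0 := by
  refine ⟨fun h => hA.eq_zero_of_forall_le fun i j hij => ?_, fun h => by rw [h, map_zero]⟩
  have hre : RCLike.re (A i j) = 0 := by
    simpa [upperReLowerIm, hij] using congrFun h (i, j)
  have him : RCLike.im (A i j) = 0 := by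
    rcases hij.eq_or_lt with rfl | hlt
    · exact RCLike.conj_eq_iff_im.1 (hA.apply i i)
    · simpa [upperReLowerIm, hlt.not_ge] using congrFun h (j, i)
  exact RCLike.ext (by simpa using hre) (by simpa using him)

theorem Nat.choose_succ_two_le (m : ℕ) : (m + 1).choose 2 ≤ (m + 2) * (m - 1) / 2 + 1 := by
  rcases m with _ | k
  · simp
  · rw [Nat.choose_two_right, Nat.add_sub_cancel, Nat.add_sub_cancel,
      show (k + 1 + 1) * (k + 1) = (k + 1 + 2) * k + 1 * 2 by ring,
      Nat.add_mul_div_right _ _ two_pos]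

theorem finrank_selfAdjoint_matrix_le (m : ℕ) :
    Module.finrank ℝ (selfAdjoint.submodule ℝ (Matrix (Fin m) (Fin m) 𝕜)) ≤ dF 𝕜 m + 1 := by
  set H := selfAdjoint.submodule ℝ (Matrix (Fin m) (Fin m) 𝕜)
  by_cases hI : (RCLike.I : 𝕜) = 0
  · have hinj : Function.Injective (upperRe 𝕜 m ∘ₗ H.subtype) :=
      injective_iff_map_eq_zero _ |>.2 fun A hA => Subtype.ext <|
        (upperRe_eq_zero_iff hI A.2).1 hA
    have := LinearMap.finrank_le_finrank_of_injective hinj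
    rw [Module.finrank_fintype_fun_eq_card, ← Fintype.card_congr Sym2.sortEquiv, Sym2.card,
      Fintype.card_fin] at this
    rw [dF, if_pos hI]
    exact this.trans (Nat.choose_succ_two_le m)
  · have hinj : Function.Injective (upperReLowerIm 𝕜 m ∘ₗ H.subtype) :=
      injective_iff_map_eq_zero _ |>.2 fun A hA => Subtype.ext <|
        (upperReLowerIm_eq_zero_iff A.2).1 hA
    have := LinearMap.finrank_le_finrank_of_injective hinj
    rw [Module.finrank_fintype_fun_eq_card, Fintype.card_prod, Fintype.card_fin] at this
    rw [dF, if_neg hI, sq]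
    omega

theorem card_le_dF_add_one_of_linearIndependent {ι : Type*} [Fintype ι] {m : ℕ}
    {M : ι → Matrix (Fin m) (Fin m) 𝕜} (hM : ∀ j, (M j).IsHermitian)
    (hli : LinearIndependent ℝ M) : Fintype.card ι ≤ dF 𝕜 m + 1 := by
  rw [← finrank_span_eq_card hli]
  exact (Submodule.finrank_mono (Submodule.span_le.2 (Set.range_subset_iff.2 hM))).trans
    (finrank_selfAdjoint_matrix_le m)

theorem stmt1 {n l m : ℕ} (hn : 2 ≤ n) (hl : 0 < l) (hlm : l < m)
    (P : Fin n → Matrix (Fin m) (Fin m) 𝕜)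
    (hFF : IsFusionFrame l P) :
    (∃ j k : Fin n, j ≠ k ∧
      ((n : ℝ) * l ^ 2 - m * l) / (m * ((n : ℝ) - 1)) ≤
        RCLike.re ((P j * P k).trace)) ∧
    ((∀ j k : Fin n, j ≠ k →
        RCLike.re ((P j * P k).trace) ≤
          ((n : ℝ) * l ^ 2 - m * l) / (m * ((n : ℝ) - 1))) →
      (∃ C : ℝ, ∀ j k : Fin n, j ≠ k → RCLike.re ((P j * P k).trace) = C) ∧
      n ≤ dF 𝕜 m + 1) := by
  obtain ⟨hherm, hidem, hrank, -⟩ := hFF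
  have hsum := sum_offDiag_simplexBound_le (by rwa [Fintype.card_fin]) (hl.trans hlm)
    hherm hidem hrank
  rw [Fintype.card_fin] at hsum
  have hne : (Finset.univ.offDiag : Finset (Fin n × Fin n)).Nonempty :=
    ⟨(⟨0, by omega⟩, ⟨1, by omega⟩), by simp [Fin.ext_iff]⟩
  refine ⟨?_, fun hle => ?_⟩
  · obtain ⟨p, hp, hp_le⟩ := Finset.exists_le_of_sum_le hne hsum
    exact ⟨p.1, p.2, (Finset.mem_offDiag.1 hp).2.2, hp_le⟩
  · have hle' : ∀ p ∈ Finset.univ.offDiag,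
        RCLike.re (P p.1 * P p.2).trace ≤ simplexBound n l m :=
      fun p hp => hle p.1 p.2 (Finset.mem_offDiag.1 hp).2.2
    have heq : ∀ j k, j ≠ k → RCLike.re (P j * P k).trace = simplexBound n l m :=
      fun j k hjk => (Finset.sum_eq_sum_iff_of_le hle').1
        ((Finset.sum_le_sum hle').antisymm hsum) (j, k) (by simpa using hjk)
    have hn' : (1 : ℝ) < n := by exact_mod_cast hn
    have hl' : (0 : ℝ) < l := by exact_mod_cast hl
    have hlm' : (l : ℝ) < m := by exact_mod_cast hlm
    have hli := linearIndependent_of_re_trace_mul_eq_ite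
      (fun j => (re_trace_mul_self_of_isIdempotentElem (hidem j)).trans (congrArg _ (hrank j)))
      heq (simplexBound_lt hn' hl' hlm').ne' (by
        rw [Fintype.card_fin, add_mul_simplexBound hn'.ne' (hl'.trans hlm').ne']
        exact (div_pos (by positivity) (hl'.trans hlm')).ne')
    exact ⟨⟨_, heq⟩, by simpa using card_le_dF_add_one_of_linearIndependent hherm hli⟩

end
end

section
/- Let {P_1, …, P_n} be an (n,l,m)-fusion frame over 𝔽 with 0 < l < m and let V_j = √(m/(l(m−l))) · (P_j − (l/m)·I_m) be the embedded unit vectors. Then tr(V_j V_k) ≥ −l/(m−l) for every pair j ≠ k. In particular, if tr(V_j V_k) = −1 for some pair j ≠ k (antipodal embedded vectors), then l ≥ m/2. -/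
/-! The shifted projections `P - (l/m) I` have inner products `tr(P_j P_k) - l²/m`, and
`tr(P_j P_k) = ‖P_k P_j‖²_F ≥ 0` for orthogonal projections. Rescaling gives
`tr(V_j V_k) ≥ -l/(m-l)`, and `-1 ≥ -l/(m-l)` forces `m - l ≤ l`. -/

open Matrix

noncomputable section

variable {𝕜 : Type*} [RCLike 𝕜]

namespace Matrix

theorem trace_eq_rank_of_mul_self {K n : Type*} [Field K] [Fintype n] [DecidableEq n]
    {A : Matrix n n K} (hA : A * A = A) : A.trace = A.rank := by
  have hproj : IsIdempotentElem (toLin' A) := by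
    rw [IsIdempotentElem, Module.End.mul_eq_comp, ← toLin'_mul, hA]
  rw [← trace_toLin'_eq, (LinearMap.isProj_range_iff_isIdempotentElem _).mpr hproj |>.trace,
    rank, toLin'_apply']

open scoped ComplexOrder in
theorem re_trace_mul_nonneg_of_isHermitian_of_mul_self {n : Type*} [Fintype n]
    {P Q : Matrix n n 𝕜} (hP : P.IsHermitian) (hPP : P * P = P)
    (hQ : Q.IsHermitian) (hQQ : Q * Q = Q) : 0 ≤ RCLike.re (P * Q).trace := by
  have hsq : (P * Q).trace = ((Q * P)ᴴ * (Q * P)).trace :=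
    calc (P * Q).trace = (P * P * (Q * Q)).trace := by rw [hPP, hQQ]
      _ = (P * Q * Q * P).trace := by
        rw [Matrix.mul_assoc, trace_mul_comm, ← Matrix.mul_assoc P Q Q]
      _ = ((Q * P)ᴴ * (Q * P)).trace := by
        rw [conjTranspose_mul, hP.eq, hQ.eq, Matrix.mul_assoc, Matrix.mul_assoc]
  rw [hsq]
  exact (RCLike.nonneg_iff.mp (posSemidef_conjTranspose_mul_self _).trace_nonneg).1

theorem trace_smul_sub_mul_smul_sub {R n : Type*} [CommRing R] [Fintype n] [DecidableEq n]
    (c a : R) (P Q : Matrix n n R) :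
    ((c • (P - a • 1)) * (c • (Q - a • 1))).trace =
      c ^ 2 * ((P * Q).trace - a * (P.trace + Q.trace) + a ^ 2 * Fintype.card n) := by
  simp only [sub_mul, mul_sub, Matrix.smul_mul, Matrix.mul_smul, Matrix.mul_one,
    Matrix.one_mul, trace_smul, trace_sub, trace_one, smul_eq_mul]
  ring

end Matrix

/-- The paper's embedded vector `V_j`: a unit vector for the trace form when `rank P = l`. -/
def fusionFrameEmbedding {m : ℕ} (l : ℕ) (P : Matrix (Fin m) (Fin m) 𝕜) :
    Matrix (Fin m) (Fin m) 𝕜 :=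
  (↑(Real.sqrt ((m : ℝ) / ((l : ℝ) * ((m : ℝ) - (l : ℝ))))) : 𝕜) •
    (P - ((l : 𝕜) / (m : 𝕜)) • (1 : Matrix (Fin m) (Fin m) 𝕜))

section Embedding

variable {l m : ℕ} {P Q : Matrix (Fin m) (Fin m) 𝕜}

theorem re_trace_fusionFrameEmbedding_mul (hlm : l < m) (hP : P.trace = l) (hQ : Q.trace = l) :
    RCLike.re (fusionFrameEmbedding l P * fusionFrameEmbedding l Q).trace =
      m / (l * (m - l)) * RCLike.re (P * Q).trace - l / (m - l) := by
  have hml : (0 : ℝ) < m - l := sub_pos.2 (by exact_mod_cast hlm)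
  have hm : (m : ℝ) ≠ 0 := Nat.cast_ne_zero.2 (by omega)
  rw [fusionFrameEmbedding, fusionFrameEmbedding, trace_smul_sub_mul_smul_sub, hP, hQ,
    Fintype.card_fin, ← RCLike.ofReal_pow, Real.sq_sqrt (by positivity)]
  have hconst : (l : 𝕜) / m * (l + l) - (l / m) ^ 2 * m = ((l ^ 2 / m : ℝ) : 𝕜) := by
    push_cast
    field_simp
    ring
  rw [sub_add, hconst, RCLike.re_ofReal_mul, map_sub, RCLike.ofReal_re, mul_sub]
  congr 1
  field_simp

theorem neg_div_sub_le_re_trace_fusionFrameEmbedding_mul (hlm : l < m)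
    (hP : P.IsHermitian) (hPP : P * P = P) (hPl : P.trace = l)
    (hQ : Q.IsHermitian) (hQQ : Q * Q = Q) (hQl : Q.trace = l) :
    -(l : ℝ) / (m - l) ≤
      RCLike.re (fusionFrameEmbedding l P * fusionFrameEmbedding l Q).trace := by
  have hml : (0 : ℝ) < m - l := sub_pos.2 (by exact_mod_cast hlm)
  rw [re_trace_fusionFrameEmbedding_mul hlm hPl hQl, neg_div, neg_le_sub_iff_le_add,
    le_add_iff_nonneg_left]
  exact mul_nonneg (by positivity) (re_trace_mul_nonneg_of_isHermitian_of_mul_self hP hPP hQ hQQ)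

end Embedding

theorem stmt3_general {n l m : ℕ} (hlm : l < m)
    (P : Fin n → Matrix (Fin m) (Fin m) 𝕜)
    (hFF : IsFusionFrame l P)
    (V : Fin n → Matrix (Fin m) (Fin m) 𝕜)
    (hV : ∀ j, V j =
      (↑(Real.sqrt ((m : ℝ) / ((l : ℝ) * ((m : ℝ) - (l : ℝ))))) : 𝕜) •
        (P j - ((l : 𝕜) / (m : 𝕜)) • (1 : Matrix (Fin m) (Fin m) 𝕜))) :
    (∀ j k : Fin n, j ≠ k →
      -(l : ℝ) / ((m : ℝ) - l) ≤ RCLike.re ((V j * V k).trace)) ∧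
    ((∃ j k : Fin n, j ≠ k ∧ RCLike.re ((V j * V k).trace) = -1) →
      (m : ℝ) / 2 ≤ (l : ℝ)) := by
  obtain ⟨hHerm, hIdem, hRank, -⟩ := hFF
  have htrace (j : Fin n) : (P j).trace = l := by
    rw [trace_eq_rank_of_mul_self (hIdem j), hRank j]
  have hlower (j k : Fin n) : -(l : ℝ) / ((m : ℝ) - l) ≤ RCLike.re ((V j * V k).trace) := by
    rw [hV j, hV k]
    exact neg_div_sub_le_re_trace_fusionFrameEmbedding_mul hlm
      (hHerm j) (hIdem j) (htrace j) (hHerm k) (hIdem k) (htrace k)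
  refine ⟨fun j k _ => hlower j k, ?_⟩
  rintro ⟨j, k, -, hantipodal⟩
  have hml : (0 : ℝ) < m - l := sub_pos.2 (by exact_mod_cast hlm)
  have h := hlower j k
  rw [hantipodal, neg_div, neg_le_neg_iff, one_le_div hml] at h
  linarith

theorem stmt3 {n l m : ℕ} (hl : 0 < l) (hlm : l < m)
    (P : Fin n → Matrix (Fin m) (Fin m) 𝕜)
    (hFF : IsFusionFrame l P)
    (V : Fin n → Matrix (Fin m) (Fin m) 𝕜)
    (hV : ∀ j, V j =
      (↑(Real.sqrt ((m : ℝ) / ((l : ℝ) * ((m : ℝ) - (l : ℝ))))) : 𝕜) •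
        (P j - ((l : 𝕜) / (m : 𝕜)) • (1 : Matrix (Fin m) (Fin m) 𝕜))) :
    (∀ j k : Fin n, j ≠ k →
      -(l : ℝ) / ((m : ℝ) - l) ≤ RCLike.re ((V j * V k).trace)) ∧
    ((∃ j k : Fin n, j ≠ k ∧ RCLike.re ((V j * V k).trace) = -1) →
      (m : ℝ) / 2 ≤ (l : ℝ)) :=
  stmt3_general hlm P hFF V hV

end
end

section
/- Let 𝕊 be a collection of n distinct subsets of {1,…,m}, each of cardinality l, with n > m. Then max over distinct pairs J ≠ J' in 𝕊 of |J ∩ J'| is at least l²/m. Moreover, if n = 2(m−1) and this maximum equals l²/m, then l = m/2 and 𝕊 can be partitioned into m−1 pairs of disjoint subsets of size m/2. -/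
/-!
Put `t = l / m` and send each `J ∈ 𝕊` to its centred indicator vector `1_J - t • 𝟙` in `ℝ^m`.
These vectors lie in the hyperplane `𝟙ᗮ` of dimension `m - 1`, and the inner product of the
vectors of `J` and `J'` is `|J ∩ J'| - l² / m`.

It then suffices to know that in a real inner product space of dimension `d` a family with
pairwise negative inner products has at most `d + 1` members, and that a family of nonzero
vectors with pairwise nonpositive inner products has at most `2 d` members, where, if there are
exactly `2 d`, each member has a negative multiple in the family. Both go by induction on `d`,
projecting onto the orthogonal complement of one member `v`, which keeps the inner products of
the other members negative (resp. nonpositive). In the strict case only `v` is dropped. In the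
other case the members on the line `ℝ v` are dropped: besides `v` there is at most one, a
negative multiple of `v`, and it must be there when the family has `2 d` members.

Finally, a negative multiple of `1_J - t • 𝟙` of the form `1_J' - t • 𝟙` forces `t = 1 / 2` and
`J' = Jᶜ`.
-/

open Module Submodule Finset
open scoped InnerProductSpace

theorem card_eq_one_add_card_filter_ne_add_card_not {ι : Type*} [Fintype ι] [DecidableEq ι]
    (p : ι → Prop) [DecidablePred p] {i₀ : ι} (hi₀ : p i₀) :
    Fintype.card ι = 1 + #{i | p i ∧ i ≠ i₀} + Fintype.card {i // ¬p i} := by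
  rw [Fintype.card_subtype, ← Finset.card_univ,
    ← Finset.card_filter_add_card_filter_not (s := Finset.univ) p]
  have : filter p univ = insert i₀ (univ.filter fun i => p i ∧ i ≠ i₀) := by
    ext i; by_cases h : i = i₀ <;> simp [h, hi₀]
  rw [this, Finset.card_insert_of_notMem (by simp)]
  omega

section ObtuseFamily

variable {E : Type*} [NormedAddCommGroup E] [InnerProductSpace ℝ E]

theorem inner_orthogonalProjectionOnto_orthogonal_span_singleton
    (v x y : E) [(ℝ ∙ v).HasOrthogonalProjection] :
    ⟪(ℝ ∙ v)ᗮ.orthogonalProjectionOnto x, (ℝ ∙ v)ᗮ.orthogonalProjectionOnto y⟫_ℝ =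
      ⟪x, y⟫_ℝ - ⟪v, x⟫_ℝ * ⟪v, y⟫_ℝ / ‖v‖ ^ 2 := by
  rw [inner_orthogonalProjectionOnto_eq_of_mem_left, orthogonalProjectionOnto_orthogonal, coe_mk,
    starProjection_singleton, inner_sub_left, inner_smul_left]
  simp only [RCLike.conj_to_real, RCLike.ofReal_real_eq_id, id]
  ring

theorem orthogonalProjectionOnto_orthogonal_eq_zero_iff
    [FiniteDimensional ℝ E] {v x : E} :
    (ℝ ∙ v)ᗮ.orthogonalProjectionOnto x = 0 ↔ x ∈ ℝ ∙ v := by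
  rw [orthogonalProjectionOnto_eq_zero_iff, orthogonal_orthogonal]

theorem finrank_orthogonal_span_singleton_add_one [FiniteDimensional ℝ E] {v : E} (hv : v ≠ 0) :
    finrank ℝ (ℝ ∙ v)ᗮ + 1 = finrank ℝ E := by
  rw [← finrank_add_finrank_orthogonal (ℝ ∙ v), finrank_span_singleton hv, add_comm]

theorem inner_pos_of_mem_span_singleton {v x y : E} (hx : x ∈ ℝ ∙ v) (hy : y ∈ ℝ ∙ v)
    (hx₀ : x ≠ 0) (hy₀ : y ≠ 0) (hxv : ⟪x, v⟫_ℝ ≤ 0) (hyv : ⟪y, v⟫_ℝ ≤ 0) : 0 < ⟪x, y⟫_ℝ := by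
  obtain ⟨a, rfl⟩ := mem_span_singleton.mp hx
  obtain ⟨b, rfl⟩ := mem_span_singleton.mp hy
  have hv : 0 < ‖v‖ ^ 2 := by
    have : v ≠ 0 := by rintro rfl; simp at hx₀
    positivity
  have ha : a ≠ 0 := by rintro rfl; simp at hx₀
  have hb : b ≠ 0 := by rintro rfl; simp at hy₀
  simp only [inner_smul_left, inner_smul_right, real_inner_self_eq_norm_sq,
    RCLike.conj_to_real] at hxv hyv ⊢
  have ha' : a < 0 := lt_of_le_of_ne (nonpos_of_mul_nonpos_left hxv hv) ha
  have hb' : b < 0 := lt_of_le_of_ne (nonpos_of_mul_nonpos_left hyv hv) hb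
  nlinarith [mul_pos_of_neg_of_neg ha' hb']

variable {ι : Type*} {v : ι → E}

theorem ne_of_notMem_span_singleton {i i₀ : ι} (hi : v i ∉ ℝ ∙ v i₀) : i ≠ i₀ := by
  rintro rfl; exact hi (mem_span_singleton_self _)

theorem pairwise_inner_orthogonalProjectionOnto_nonpos
    (h : Pairwise fun i j => ⟪v i, v j⟫_ℝ ≤ 0) (i₀ : ι) :
    Pairwise fun i j : {i // v i ∉ ℝ ∙ v i₀} =>
      ⟪(ℝ ∙ v i₀)ᗮ.orthogonalProjectionOnto (v i), (ℝ ∙ v i₀)ᗮ.orthogonalProjectionOnto (v j)⟫_ℝ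
        ≤ 0 := by
  intro i j hij
  rw [inner_orthogonalProjectionOnto_orthogonal_span_singleton]
  have hi := h (ne_of_notMem_span_singleton i.2).symm
  have hj := h (ne_of_notMem_span_singleton j.2).symm
  have : 0 ≤ ⟪v i₀, v i⟫_ℝ * ⟪v i₀, v j⟫_ℝ / ‖v i₀‖ ^ 2 :=
    div_nonneg (mul_nonneg_of_nonpos_of_nonpos hi hj) (sq_nonneg _)
  linarith [h (Subtype.coe_injective.ne hij)]

variable [Fintype ι]

open scoped Classical in
theorem card_filter_mem_span_singleton_le_one (hv : ∀ i, v i ≠ 0)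
    (h : Pairwise fun i j => ⟪v i, v j⟫_ℝ ≤ 0) (i₀ : ι) :
    #{i | v i ∈ ℝ ∙ v i₀ ∧ i ≠ i₀} ≤ 1 := by
  refine Finset.card_le_one.mpr fun i hi j hj => by_contra fun hij => ?_
  simp only [Finset.mem_filter, Finset.mem_univ, true_and] at hi hj
  exact (h hij).not_gt (inner_pos_of_mem_span_singleton hi.1 hj.1 (hv i) (hv j) (h hi.2) (h hj.2))

variable [FiniteDimensional ℝ E]

theorem card_le_two_mul_finrank_of_pairwise_inner_nonpos (hv : ∀ i, v i ≠ 0)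
    (h : Pairwise fun i j => ⟪v i, v j⟫_ℝ ≤ 0) : Fintype.card ι ≤ 2 * finrank ℝ E := by
  classical
  obtain ⟨d, hd⟩ : ∃ d, finrank ℝ E = d := ⟨_, rfl⟩
  induction d generalizing E ι with
  | zero =>
    have : Subsingleton E := finrank_zero_iff.mp hd
    have : IsEmpty ι := ⟨fun i => hv i (Subsingleton.elim _ _)⟩
    simp
  | succ d ih =>
    rcases isEmpty_or_nonempty ι with hι | ⟨⟨i₀⟩⟩
    · simp
    have hdim : finrank ℝ (ℝ ∙ v i₀)ᗮ = d := by
      have := finrank_orthogonal_span_singleton_add_one (hv i₀); omega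
    have hproj := ih
      (fun i : {i // v i ∉ ℝ ∙ v i₀} =>
        orthogonalProjectionOnto_orthogonal_eq_zero_iff.not.mpr i.2)
      (pairwise_inner_orthogonalProjectionOnto_nonpos h i₀) hdim
    have hspan := card_filter_mem_span_singleton_le_one hv h i₀
    rw [card_eq_one_add_card_filter_ne_add_card_not (fun i => v i ∈ ℝ ∙ v i₀)
      (mem_span_singleton_self (v i₀))]
    omega

theorem exists_neg_smul_of_card_eq_two_mul_finrank (hv : ∀ i, v i ≠ 0)
    (h : Pairwise fun i j => ⟪v i, v j⟫_ℝ ≤ 0) (hcard : Fintype.card ι = 2 * finrank ℝ E)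
    (i₀ : ι) : ∃ j ≠ i₀, ∃ c : ℝ, c < 0 ∧ v j = c • v i₀ := by
  classical
  obtain ⟨j, hj⟩ : (univ.filter fun i => v i ∈ ℝ ∙ v i₀ ∧ i ≠ i₀).Nonempty := by
    rw [← card_pos, Nat.pos_iff_ne_zero]
    intro h₀
    have hproj := card_le_two_mul_finrank_of_pairwise_inner_nonpos
      (fun i : {i // v i ∉ ℝ ∙ v i₀} =>
        orthogonalProjectionOnto_orthogonal_eq_zero_iff.not.mpr i.2)
      (pairwise_inner_orthogonalProjectionOnto_nonpos h i₀)
    have := finrank_orthogonal_span_singleton_add_one (hv i₀)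
    rw [card_eq_one_add_card_filter_ne_add_card_not (fun i => v i ∈ ℝ ∙ v i₀)
      (mem_span_singleton_self (v i₀))] at hcard
    omega
  simp only [mem_filter, mem_univ, true_and] at hj
  obtain ⟨c, hc⟩ := mem_span_singleton.mp hj.1
  refine ⟨j, hj.2, c, ?_, hc.symm⟩
  have hinner : ⟪v j, v i₀⟫_ℝ ≤ 0 := h hj.2
  rw [← hc, real_inner_smul_left, real_inner_self_eq_norm_sq] at hinner
  have hc₀ : c ≠ 0 := by rintro rfl; exact hv j (by rw [← hc, zero_smul])
  have := norm_pos_iff.mpr (hv i₀)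
  exact lt_of_le_of_ne (nonpos_of_mul_nonpos_left hinner (by positivity)) hc₀

theorem card_le_finrank_add_one_of_pairwise_inner_neg
    (h : Pairwise fun i j => ⟪v i, v j⟫_ℝ < 0) : Fintype.card ι ≤ finrank ℝ E + 1 := by
  classical
  obtain ⟨d, hd⟩ : ∃ d, finrank ℝ E = d := ⟨_, rfl⟩
  induction d generalizing E ι with
  | zero =>
    have : Subsingleton E := finrank_zero_iff.mp hd
    refine hd ▸ Fintype.card_le_one_iff.mpr fun i j => by_contra fun hij => (h hij).ne ?_
    simp [Subsingleton.elim (v i) 0]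
  | succ d ih =>
    rcases subsingleton_or_nontrivial ι with hι | ⟨i₀, j₀, hij⟩
    · linarith [Fintype.card_le_one_iff_subsingleton.mpr hι]
    have hv₀ : v i₀ ≠ 0 := fun h₀ => (h hij).ne (by simp [h₀])
    have hdim : finrank ℝ (ℝ ∙ v i₀)ᗮ = d := by
      have := finrank_orthogonal_span_singleton_add_one hv₀; omega
    have hproj := ih
      (v := fun i : {i // i ≠ i₀} => (ℝ ∙ v i₀)ᗮ.orthogonalProjectionOnto (v i))
      (fun i j hij => by
        dsimp only
        rw [inner_orthogonalProjectionOnto_orthogonal_span_singleton]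
        have : 0 ≤ ⟪v i₀, v i⟫_ℝ * ⟪v i₀, v j⟫_ℝ / ‖v i₀‖ ^ 2 :=
          div_nonneg (mul_nonneg_of_nonpos_of_nonpos (h i.2.symm).le (h j.2.symm).le)
            (sq_nonneg _)
        linarith [h (Subtype.coe_injective.ne hij)]) hdim
    have : Fintype.card {i // i ≠ i₀} = Fintype.card ι - 1 := by
      simp [Fintype.card_subtype_compl]
    have := Fintype.card_pos_iff.mpr ⟨i₀⟩
    omega

end ObtuseFamily

section SetSystem

section

variable {α : Type*} [DecidableEq α]

def centeredIndicator (t : ℝ) (J : Finset α) : EuclideanSpace ℝ α :=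
  WithLp.toLp 2 fun x => (if x ∈ J then 1 else 0) - t

theorem centeredIndicator_ne_zero {t : ℝ} {J : Finset α} (hJ : J.Nonempty) (ht : t ≠ 1) :
    centeredIndicator t J ≠ 0 := by
  obtain ⟨x, hx⟩ := hJ
  intro h
  have := congr(WithLp.ofLp $h x)
  simp only [centeredIndicator, hx, if_true, WithLp.ofLp_zero, Pi.zero_apply] at this
  exact ht (by linarith)

end

variable {α : Type*} [Fintype α]

def allOnes (α : Type*) : EuclideanSpace ℝ α := WithLp.toLp 2 1

theorem finrank_orthogonal_allOnes [Nonempty α] :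
    finrank ℝ (ℝ ∙ allOnes α)ᗮ = Fintype.card α - 1 := by
  have hne : allOnes α ≠ 0 := fun h => by
    simpa [allOnes] using congr(WithLp.ofLp $h (Classical.arbitrary α))
  have := finrank_orthogonal_span_singleton_add_one hne
  rw [finrank_euclideanSpace] at this
  omega

theorem pos_and_lt_card_of_ne {l : ℕ} {J J' : Finset α} (hJ : #J = l) (hJ' : #J' = l)
    (hne : J ≠ J') : 0 < l ∧ l < Fintype.card α := by
  refine ⟨Nat.pos_of_ne_zero fun hl => hne ?_,
    lt_of_le_of_ne (hJ ▸ card_le_univ J) fun hl => hne ?_⟩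
  · rw [card_eq_zero.mp (hJ.trans hl), card_eq_zero.mp (hJ'.trans hl)]
  · rw [eq_univ_of_card J (hJ.trans hl), eq_univ_of_card J' (hJ'.trans hl)]

variable [DecidableEq α]

theorem inner_centeredIndicator (t : ℝ) (J J' : Finset α) :
    ⟪centeredIndicator t J, centeredIndicator t J'⟫_ℝ =
      #(J ∩ J') - t * #J - t * #J' + t ^ 2 * Fintype.card α := by
  simp [centeredIndicator, EuclideanSpace.inner_toLp_toLp, dotProduct, sub_mul, mul_sub,
    sum_sub_distrib, ite_mul, sum_ite_mem, inter_comm]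
  ring

theorem inner_allOnes_centeredIndicator (t : ℝ) (J : Finset α) :
    ⟪allOnes α, centeredIndicator t J⟫_ℝ = #J - t * Fintype.card α := by
  simp [centeredIndicator, allOnes, EuclideanSpace.inner_toLp_toLp, dotProduct, sum_sub_distrib,
    mul_comm]

theorem eq_compl_of_centeredIndicator_eq_smul {t c : ℝ} {J J' : Finset α} (ht : 0 < t)
    (hc : c < 0) (hJ : J.Nonempty) (hJ' : J ≠ univ)
    (h : centeredIndicator t J' = c • centeredIndicator t J) : J' = Jᶜ ∧ 2 * t = 1 := by
  have hcoord (x : α) : (if x ∈ J' then 1 else 0) - t = c * ((if x ∈ J then 1 else 0) - t) := by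
    simpa [centeredIndicator] using congr(WithLp.ofLp $h x)
  obtain ⟨x, hxJ⟩ := hJ
  obtain ⟨y, hyJ⟩ : ∃ y, y ∉ J := by simpa [eq_univ_iff_forall] using hJ'
  have hx := hcoord x
  have hy := hcoord y
  rw [if_pos hxJ] at hx
  rw [if_neg hyJ] at hy
  -- the coordinate of `J'` is `t * (1 - c) > 0` at `y` and `1 + c < 1` at `x`
  have hyJ' : y ∈ J' := by
    by_contra hn; rw [if_neg hn] at hy; nlinarith
  rw [if_pos hyJ'] at hy
  have hxJ' : x ∉ J' := by
    intro hm; rw [if_pos hm] at hx; nlinarith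
  rw [if_neg hxJ'] at hx
  have hc₁ : c = -1 := by linarith
  refine ⟨?_, by subst hc₁; linarith⟩
  ext z
  have hz := hcoord z
  subst hc₁
  by_cases hzJ : z ∈ J <;> by_cases hzJ' : z ∈ J' <;>
    simp only [hzJ, hzJ', if_true, if_false] at hz <;> simp [hzJ, hzJ'] <;> linarith

variable [Nonempty α]

theorem centeredIndicator_mem_orthogonal_allOnes {l : ℕ} {J : Finset α} (hJ : #J = l) :
    centeredIndicator ((l : ℝ) / Fintype.card α) J ∈ (ℝ ∙ allOnes α)ᗮ := by
  rw [mem_orthogonal_singleton_iff_inner_right, inner_allOnes_centeredIndicator, hJ,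
    div_mul_cancel₀ _ (by positivity), sub_self]

theorem inner_centeredIndicator_of_card_eq {l : ℕ} {J J' : Finset α} (hJ : #J = l)
    (hJ' : #J' = l) :
    ⟪centeredIndicator ((l : ℝ) / Fintype.card α) J,
      centeredIndicator ((l : ℝ) / Fintype.card α) J'⟫_ℝ =
        #(J ∩ J') - (l : ℝ) ^ 2 / Fintype.card α := by
  have : (Fintype.card α : ℝ) ≠ 0 := by positivity
  rw [inner_centeredIndicator, hJ, hJ']
  field_simp
  ring

noncomputable def centeredFamily (S : Finset (Finset α)) (l : ℕ) (hS : ∀ J ∈ S, #J = l) :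
    S → (ℝ ∙ allOnes α)ᗮ :=
  fun J => ⟨_, centeredIndicator_mem_orthogonal_allOnes (hS J J.2)⟩

variable {S : Finset (Finset α)} {l : ℕ}

theorem inner_centeredFamily (hS : ∀ J ∈ S, #J = l) (J J' : S) :
    ⟪centeredFamily S l hS J, centeredFamily S l hS J'⟫_ℝ =
      #(J.1 ∩ J'.1) - (l : ℝ) ^ 2 / Fintype.card α :=
  inner_centeredIndicator_of_card_eq (hS J J.2) (hS J' J'.2)

theorem exists_le_card_inter_of_card_lt (hS : ∀ J ∈ S, #J = l) (hcard : Fintype.card α < #S) :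
    ∃ J ∈ S, ∃ J' ∈ S, J ≠ J' ∧ (l : ℝ) ^ 2 / Fintype.card α ≤ #(J ∩ J') := by
  by_contra! hlt
  have hbound := card_le_finrank_add_one_of_pairwise_inner_neg (v := centeredFamily S l hS)
    fun J J' hne => (inner_centeredFamily hS J J').trans_lt
      (sub_neg.mpr (hlt J J.2 J' J'.2 (Subtype.coe_injective.ne hne)))
  rw [finrank_orthogonal_allOnes, Fintype.card_coe] at hbound
  have := Fintype.card_pos (α := α)
  omega

theorem card_eq_two_mul_and_compl_mem (hS : ∀ J ∈ S, #J = l) (hα : 2 ≤ Fintype.card α)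
    (hcard : #S = 2 * (Fintype.card α - 1))
    (hmax : ∀ J ∈ S, ∀ J' ∈ S, J ≠ J' → (#(J ∩ J') : ℝ) ≤ (l : ℝ) ^ 2 / Fintype.card α) :
    Fintype.card α = 2 * l ∧ ∀ J ∈ S, Jᶜ ∈ S := by
  obtain ⟨J₁, hJ₁, J₂, hJ₂, hne⟩ := one_lt_card.mp (by omega : 1 < #S)
  obtain ⟨hl, hlα⟩ := pos_and_lt_card_of_ne (hS J₁ hJ₁) (hS J₂ hJ₂) hne
  have hm : (0 : ℝ) < Fintype.card α := by positivity
  have ht : (l : ℝ) / Fintype.card α ≠ 1 := by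
    rw [Ne, div_eq_one_iff_eq hm.ne']; exact_mod_cast hlα.ne
  have hJ_nonempty (J : S) : J.1.Nonempty := card_pos.mp (hS J J.2 ▸ hl)
  have hJ_ne_univ (J : S) : J.1 ≠ univ := fun h => hlα.ne (by rw [← hS J J.2, h, card_univ])
  have hpaired (J : S) : J.1ᶜ ∈ S ∧ 2 * ((l : ℝ) / Fintype.card α) = 1 := by
    obtain ⟨J', -, c, hc, hJ'⟩ := exists_neg_smul_of_card_eq_two_mul_finrank
      (v := centeredFamily S l hS)
      (fun J => by simpa [centeredFamily] using centeredIndicator_ne_zero (hJ_nonempty J) ht)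
      (fun J J' hne => (inner_centeredFamily hS J J').trans_le
        (sub_nonpos.mpr (hmax J J.2 J' J'.2 (Subtype.coe_injective.ne hne))))
      (by rw [Fintype.card_coe, finrank_orthogonal_allOnes, hcard]) J
    obtain ⟨hcompl, hhalf⟩ := eq_compl_of_centeredIndicator_eq_smul (by positivity) hc
      (hJ_nonempty J) (hJ_ne_univ J) congr(Subtype.val $hJ')
    exact ⟨hcompl ▸ J'.2, hhalf⟩
  refine ⟨?_, fun J hJ => (hpaired ⟨J, hJ⟩).1⟩
  have := (hpaired ⟨J₁, hJ₁⟩).2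
  field_simp at this
  exact_mod_cast this.symm

end SetSystem

theorem stmt12_general {m l n : ℕ} (hm : 0 < m) (hn : m < n)
    (S : Finset (Finset (Fin m))) (hcard : S.card = n)
    (hsize : ∀ J ∈ S, J.card = l) :
    -- the maximal pairwise intersection is at least `l²/m`
    (∃ J ∈ S, ∃ J' ∈ S, J ≠ J' ∧ (l : ℝ) ^ 2 / (m : ℝ) ≤ ((J ∩ J').card : ℝ)) ∧
    -- if `n = 2(m-1)` and the maximum equals `l²/m`, then `l = m/2` and `S`
    -- splits into `m-1` pairs of disjoint blocks of size `m/2`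
    (n = 2 * (m - 1) →
      (∀ J ∈ S, ∀ J' ∈ S, J ≠ J' → ((J ∩ J').card : ℝ) ≤ (l : ℝ) ^ 2 / (m : ℝ)) →
      m = 2 * l ∧
      ∃ f : Finset (Fin m) → Finset (Fin m),
        ∀ J ∈ S, f J ∈ S ∧ f J ≠ J ∧ f (f J) = J ∧ Disjoint J (f J)) := by
  have : Nonempty (Fin m) := ⟨⟨0, hm⟩⟩
  refine ⟨by simpa using exists_le_card_inter_of_card_lt hsize (by simpa [hcard] using hn),
    fun hn₂ hmax => ?_⟩
  obtain ⟨hml, hcompl⟩ := card_eq_two_mul_and_compl_mem hsize (by rw [Fintype.card_fin]; omega)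
    (by simpa [hcard] using hn₂) (by simpa using hmax)
  exact ⟨by simpa using hml, compl,
    fun J hJ => ⟨hcompl J hJ, compl_ne_self, compl_compl J, disjoint_compl_right⟩⟩

theorem stmt12 {m l n : ℕ} (hm : 0 < m) (hl : 0 < l) (hn : m < n)
    (S : Finset (Finset (Fin m))) (hcard : S.card = n)
    (hsize : ∀ J ∈ S, J.card = l) :
    -- the maximal pairwise intersection is at least `l²/m`
    (∃ J ∈ S, ∃ J' ∈ S, J ≠ J' ∧ (l : ℝ) ^ 2 / (m : ℝ) ≤ ((J ∩ J').card : ℝ)) ∧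
    -- if `n = 2(m-1)` and the maximum equals `l²/m`, then `l = m/2` and `S`
    -- splits into `m-1` pairs of disjoint blocks of size `m/2`
    (n = 2 * (m - 1) →
      (∀ J ∈ S, ∀ J' ∈ S, J ≠ J' → ((J ∩ J').card : ℝ) ≤ (l : ℝ) ^ 2 / (m : ℝ)) →
      m = 2 * l ∧
      ∃ f : Finset (Fin m) → Finset (Fin m),
        ∀ J ∈ S, f J ∈ S ∧ f J ≠ J ∧ f (f J) = J ∧ Disjoint J (f J)) :=
  stmt12_general hm hn S hcard hsize
end

section
/- For every r ≥ 1, the matrix G = S_r^T S_r (a c_r × c_r matrix, c_r = 2^{r+1} − 2) satisfies, as a matrix with rational entries, G = 2^{r−2} · ( J_{c_r,c_r} + I_{c_r/2} ⊗ [[1,−1],[−1,1]] ), where J_{c_r,c_r} is the all-ones c_r × c_r matrix. In particular, each column of S_r has 2^{r−1} ones, and distinct columns s_a, s_b of S_r satisfy ⟨s_a, s_b⟩ = 0 if {a,b} = {2i−1, 2i} for some i, and ⟨s_a, s_b⟩ = 2^{r−2} otherwise. -/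
open Matrix

noncomputable section

/-- swap `2i ↔ 2i+1` -/
def pairFlip (j : ℕ) : ℕ := if j % 2 = 0 then j + 1 else j - 1

/-- the entries of the recursively defined incidence matrices `S_r`
(`Sfun r a b` is the `(a,b)` entry of `S_r`, for `a < 2^r`, `b < 2^(r+1) - 2`) -/
def Sfun : ℕ → ℕ → ℕ → ℚ
  | 0, _, _ => 0
  | 1, a, b => if a = b then 1 else 0
  | r + 2, a, b =>
    if b = 0 then (if a < 2 ^ (r + 1) then 1 else 0)
    else if b = 1 then (if a < 2 ^ (r + 1) then 0 else 1)
    else if b < 2 ^ (r + 2) then Sfun (r + 1) (a % 2 ^ (r + 1)) (b - 2)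
    else if a < 2 ^ (r + 1) then Sfun (r + 1) a (b - 2 ^ (r + 2))
    else Sfun (r + 1) (a - 2 ^ (r + 1)) (pairFlip (b - 2 ^ (r + 2)))

/-- the matrix `S_r`, a `2^r × (2^(r+1) - 2)` matrix with rational (0-1) entries -/
def S (r : ℕ) : Matrix (Fin (2 ^ r)) (Fin (2 ^ (r + 1) - 2)) ℚ :=
  Matrix.of fun a b => Sfun r a b

/-! ### auxiliary lemmas -/

lemma pf_lt {j c : ℕ} (hc : c % 2 = 0) (h : j < c) : pairFlip j < c := by
  unfold pairFlip; split <;> omega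

lemma pf_div (j : ℕ) : pairFlip j / 2 = j / 2 := by
  unfold pairFlip; split <;> omega

lemma pf_inj {j k : ℕ} (h : pairFlip j = pairFlip k) : j = k := by
  unfold pairFlip at h; split at h <;> split at h <;> omega

lemma pf_pair {j k : ℕ} (h : j / 2 = k / 2) (h1 : j ≠ k) : j = pairFlip k := by
  unfold pairFlip; split <;> omega

lemma Sfun_zero_or_one : ∀ r a b, Sfun r a b = 0 ∨ Sfun r a b = 1 := by
  intro r
  induction r using Nat.strong_induction_on with
  | _ r ih =>
    match r with
    | 0 => intro a b; left; rfl
    | 1 => intro a b; simp only [Sfun]; split <;> simp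
    | r + 2 =>
      intro a b
      simp only [Sfun]
      split
      · split <;> simp
      split
      · split <;> simp
      split
      · exact ih (r + 1) (by omega) _ _
      split
      · exact ih (r + 1) (by omega) _ _
      · exact ih (r + 1) (by omega) _ _

lemma S0top (m x : ℕ) (hx : x < 2 ^ (m + 1)) : Sfun (m + 2) x 0 = 1 := by
  simp [Sfun, hx]

lemma S0bot (m x : ℕ) : Sfun (m + 2) (2 ^ (m + 1) + x) 0 = 0 := by
  have h : ¬ (2 ^ (m + 1) + x < 2 ^ (m + 1)) := by omega
  simp [Sfun, h]

lemma S1top (m x : ℕ) (hx : x < 2 ^ (m + 1)) : Sfun (m + 2) x 1 = 0 := by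
  simp [Sfun, hx]

lemma S1bot (m x : ℕ) : Sfun (m + 2) (2 ^ (m + 1) + x) 1 = 1 := by
  have h : ¬ (2 ^ (m + 1) + x < 2 ^ (m + 1)) := by omega
  simp [Sfun, h]

lemma SIItop (m x u : ℕ) (hx : x < 2 ^ (m + 1)) (hu : 2 ≤ u) (hu2 : u < 2 ^ (m + 2)) :
    Sfun (m + 2) x u = Sfun (m + 1) x (u - 2) := by
  have h0 : u ≠ 0 := by omega
  have h1 : u ≠ 1 := by omega
  simp [Sfun, h0, h1, hu2, Nat.mod_eq_of_lt hx]

lemma SIIbot (m x u : ℕ) (hx : x < 2 ^ (m + 1)) (hu : 2 ≤ u) (hu2 : u < 2 ^ (m + 2)) :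
    Sfun (m + 2) (2 ^ (m + 1) + x) u = Sfun (m + 1) x (u - 2) := by
  have h0 : u ≠ 0 := by omega
  have h1 : u ≠ 1 := by omega
  have h2 : (2 ^ (m + 1) + x) % 2 ^ (m + 1) = x := by
    rw [Nat.add_mod_left]; exact Nat.mod_eq_of_lt hx
  simp [Sfun, h0, h1, hu2, h2]

lemma SIIItop (m x u : ℕ) (hx : x < 2 ^ (m + 1)) (hu : 2 ^ (m + 2) ≤ u) :
    Sfun (m + 2) x u = Sfun (m + 1) x (u - 2 ^ (m + 2)) := by
  have hm0 : 0 < (2:ℕ) ^ m := pow_pos (by norm_num) _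
  have hE2 : (2:ℕ) ^ (m + 2) = 4 * 2 ^ m := by ring
  have hE1 : (2:ℕ) ^ (m + 1) = 2 * 2 ^ m := by ring
  have h0 : u ≠ 0 := by omega
  have h1 : u ≠ 1 := by omega
  have h2 : ¬ (u < 2 ^ (m + 2)) := by omega
  simp [Sfun, h0, h1, h2, hx]

lemma SIIIbot (m x u : ℕ) (hx : x < 2 ^ (m + 1)) (hu : 2 ^ (m + 2) ≤ u) :
    Sfun (m + 2) (2 ^ (m + 1) + x) u = Sfun (m + 1) x (pairFlip (u - 2 ^ (m + 2))) := by
  have hm0 : 0 < (2:ℕ) ^ m := pow_pos (by norm_num) _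
  have hE2 : (2:ℕ) ^ (m + 2) = 4 * 2 ^ m := by ring
  have hE1 : (2:ℕ) ^ (m + 1) = 2 * 2 ^ m := by ring
  have h0 : u ≠ 0 := by omega
  have h1 : u ≠ 1 := by omega
  have h2 : ¬ (u < 2 ^ (m + 2)) := by omega
  have h3 : ¬ (2 ^ (m + 1) + x < 2 ^ (m + 1)) := by omega
  have h4 : 2 ^ (m + 1) + x - 2 ^ (m + 1) = x := by omega
  simp [Sfun, h0, h1, h2, h3, h4]

/-- column sums -/
lemma colsum : ∀ m b, b < 2 ^ (m + 2) - 2 →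
    ∑ x ∈ Finset.range (2 ^ (m + 1)), Sfun (m + 1) x b = (2:ℚ) ^ m := by
  intro m
  induction m with
  | zero =>
    intro b hb
    interval_cases b <;> norm_num [Sfun, Finset.sum_range_succ]
  | succ m ih =>
    intro b hb
    have hidx : m + 1 + 2 = m + 3 := by omega
    rw [hidx] at hb
    have hm0 : 0 < (2:ℕ) ^ m := pow_pos (by norm_num) _
    have hP2 : (2:ℕ) ^ (m + 2) = 2 ^ (m + 1) + 2 ^ (m + 1) := by ring
    have hP3 : (2:ℕ) ^ (m + 3) = 2 ^ (m + 2) + 2 ^ (m + 2) := by ring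
    have hP1 : 1 ≤ (2:ℕ) ^ (m + 1) := Nat.one_le_two_pow
    have hsplit : ∑ x ∈ Finset.range (2 ^ (m + 2)), Sfun (m + 2) x b =
        (∑ x ∈ Finset.range (2 ^ (m + 1)), Sfun (m + 2) x b) +
          ∑ x ∈ Finset.range (2 ^ (m + 1)), Sfun (m + 2) (2 ^ (m + 1) + x) b := by
      rw [hP2, Finset.sum_range_add]
    rw [show m + 1 + 1 = m + 2 from rfl, hsplit]
    by_cases hb0 : b = 0
    · subst hb0
      have t1 : ∑ x ∈ Finset.range (2 ^ (m + 1)), Sfun (m + 2) x 0 =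
          ∑ x ∈ Finset.range (2 ^ (m + 1)), (1:ℚ) :=
        Finset.sum_congr rfl fun x hx => S0top m x (Finset.mem_range.mp hx)
      have t2 : ∑ x ∈ Finset.range (2 ^ (m + 1)), Sfun (m + 2) (2 ^ (m + 1) + x) 0 =
          ∑ x ∈ Finset.range (2 ^ (m + 1)), (0:ℚ) :=
        Finset.sum_congr rfl fun x _ => S0bot m x
      rw [t1, t2]
      simp only [Finset.sum_const, Finset.card_range, nsmul_eq_mul, mul_one, mul_zero,
        Finset.sum_const_zero, add_zero, zero_add]
      push_cast
      ring
    by_cases hb1 : b = 1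
    · subst hb1
      have t1 : ∑ x ∈ Finset.range (2 ^ (m + 1)), Sfun (m + 2) x 1 =
          ∑ x ∈ Finset.range (2 ^ (m + 1)), (0:ℚ) :=
        Finset.sum_congr rfl fun x hx => S1top m x (Finset.mem_range.mp hx)
      have t2 : ∑ x ∈ Finset.range (2 ^ (m + 1)), Sfun (m + 2) (2 ^ (m + 1) + x) 1 =
          ∑ x ∈ Finset.range (2 ^ (m + 1)), (1:ℚ) :=
        Finset.sum_congr rfl fun x _ => S1bot m x
      rw [t1, t2]
      simp only [Finset.sum_const, Finset.card_range, nsmul_eq_mul, mul_one, mul_zero,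
        Finset.sum_const_zero, add_zero, zero_add]
      push_cast
      ring
    by_cases hbii : b < 2 ^ (m + 2)
    · have hb2 : 2 ≤ b := by omega
      have t1 : ∑ x ∈ Finset.range (2 ^ (m + 1)), Sfun (m + 2) x b =
          ∑ x ∈ Finset.range (2 ^ (m + 1)), Sfun (m + 1) x (b - 2) :=
        Finset.sum_congr rfl fun x hx => SIItop m x b (Finset.mem_range.mp hx) hb2 hbii
      have t2 : ∑ x ∈ Finset.range (2 ^ (m + 1)), Sfun (m + 2) (2 ^ (m + 1) + x) b =
          ∑ x ∈ Finset.range (2 ^ (m + 1)), Sfun (m + 1) x (b - 2) :=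
        Finset.sum_congr rfl fun x hx => SIIbot m x b (Finset.mem_range.mp hx) hb2 hbii
      rw [t1, t2, ih (b - 2) (by omega)]
      ring
    · have hbge : 2 ^ (m + 2) ≤ b := by omega
      have t1 : ∑ x ∈ Finset.range (2 ^ (m + 1)), Sfun (m + 2) x b =
          ∑ x ∈ Finset.range (2 ^ (m + 1)), Sfun (m + 1) x (b - 2 ^ (m + 2)) :=
        Finset.sum_congr rfl fun x hx => SIIItop m x b (Finset.mem_range.mp hx) hbge
      have t2 : ∑ x ∈ Finset.range (2 ^ (m + 1)), Sfun (m + 2) (2 ^ (m + 1) + x) b =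
          ∑ x ∈ Finset.range (2 ^ (m + 1)), Sfun (m + 1) x (pairFlip (b - 2 ^ (m + 2))) :=
        Finset.sum_congr rfl fun x hx => SIIIbot m x b (Finset.mem_range.mp hx) hbge
      have hev : (2 ^ (m + 2) - 2) % 2 = 0 := by omega
      rw [t1, t2, ih (b - 2 ^ (m + 2)) (by omega),
        ih (pairFlip (b - 2 ^ (m + 2))) (pf_lt hev (by omega))]
      ring

lemma two_zpow_add_self (k : ℤ) : (2:ℚ) ^ k + (2:ℚ) ^ k = 2 ^ (k + 1) := by
  rw [zpow_add₀ (by norm_num : (2:ℚ) ≠ 0)]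
  ring

/-- the key inner product computation -/
lemma key : ∀ m a b, a < 2 ^ (m + 2) - 2 → b < 2 ^ (m + 2) - 2 →
    (∑ x ∈ Finset.range (2 ^ (m + 1)), Sfun (m + 1) x a * Sfun (m + 1) x b) =
      if a = b then (2:ℚ) ^ m else if a / 2 = b / 2 then 0 else (2:ℚ) ^ ((m:ℤ) - 1) := by
  intro m
  induction m with
  | zero =>
    intro a b ha hb
    interval_cases a <;> interval_cases b <;> norm_num [Sfun, Finset.sum_range_succ]
  | succ m ih =>
    have hm0 : 0 < (2:ℕ) ^ m := pow_pos (by norm_num) _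
    have hP2 : (2:ℕ) ^ (m + 2) = 2 ^ (m + 1) + 2 ^ (m + 1) := by ring
    have hP3 : (2:ℕ) ^ (m + 3) = 2 ^ (m + 2) + 2 ^ (m + 2) := by ring
    have hP1 : 1 ≤ (2:ℕ) ^ (m + 1) := Nat.one_le_two_pow
    have hev : (2 ^ (m + 2) - 2) % 2 = 0 := by omega
    have hzm : ((m + 1 : ℕ) : ℤ) - 1 = (m : ℤ) := by push_cast; ring
    have hz1 : (2:ℚ) ^ (((m + 1 : ℕ) : ℤ) - 1) = (2:ℚ) ^ m := by
      rw [hzm, zpow_natCast]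
    have hz2 : (2:ℚ) ^ ((m:ℤ) - 1) + (2:ℚ) ^ ((m:ℤ) - 1) = (2:ℚ) ^ (((m + 1 : ℕ) : ℤ) - 1) := by
      rw [two_zpow_add_self]
      congr 1
      push_cast
      ring
    have hzpow : (2:ℚ) ^ m + (2:ℚ) ^ m = (2:ℚ) ^ (m + 1) := by ring
    suffices H : ∀ a b, a ≤ b → a < 2 ^ (m + 3) - 2 → b < 2 ^ (m + 3) - 2 →
        (∑ x ∈ Finset.range (2 ^ (m + 2)), Sfun (m + 2) x a * Sfun (m + 2) x b) =
          if a = b then (2:ℚ) ^ (m + 1) else if a / 2 = b / 2 then 0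
            else (2:ℚ) ^ (((m + 1 : ℕ) : ℤ) - 1) by
      intro a b ha hb
      have hsym : (∑ x ∈ Finset.range (2 ^ (m + 2)), Sfun (m + 2) x a * Sfun (m + 2) x b) =
          ∑ x ∈ Finset.range (2 ^ (m + 2)), Sfun (m + 2) x b * Sfun (m + 2) x a :=
        Finset.sum_congr rfl fun x _ => mul_comm _ _
      rcases le_total a b with hab | hab
      · exact H a b hab ha hb
      · rw [hsym, H b a hab hb ha]
        by_cases h1 : a = b
        · simp [h1]
        · have h2 : ¬ b = a := fun h => h1 h.symm
          rw [if_neg h2, if_neg h1]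
          by_cases h3 : a / 2 = b / 2
          · rw [if_pos h3.symm, if_pos h3]
          · rw [if_neg (fun h => h3 h.symm), if_neg h3]
    intro a b hab ha hb
    have hsplit : ∑ x ∈ Finset.range (2 ^ (m + 2)), Sfun (m + 2) x a * Sfun (m + 2) x b =
        (∑ x ∈ Finset.range (2 ^ (m + 1)), Sfun (m + 2) x a * Sfun (m + 2) x b) +
          ∑ x ∈ Finset.range (2 ^ (m + 1)),
            Sfun (m + 2) (2 ^ (m + 1) + x) a * Sfun (m + 2) (2 ^ (m + 1) + x) b := by
      rw [hP2, Finset.sum_range_add]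
    rw [hsplit]
    by_cases ha0 : a = 0
    · subst ha0
      by_cases hb0 : b = 0
      · subst hb0
        have t1 : ∑ x ∈ Finset.range (2 ^ (m + 1)), Sfun (m + 2) x 0 * Sfun (m + 2) x 0 =
            ∑ x ∈ Finset.range (2 ^ (m + 1)), (1:ℚ) :=
          Finset.sum_congr rfl fun x hx => by
            rw [S0top m x (Finset.mem_range.mp hx)]; ring
        have t2 : ∑ x ∈ Finset.range (2 ^ (m + 1)),
            Sfun (m + 2) (2 ^ (m + 1) + x) 0 * Sfun (m + 2) (2 ^ (m + 1) + x) 0 =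
            ∑ x ∈ Finset.range (2 ^ (m + 1)), (0:ℚ) :=
          Finset.sum_congr rfl fun x _ => by rw [S0bot m x]; ring
        rw [t1, t2, if_pos rfl]
        simp only [Finset.sum_const, Finset.card_range, nsmul_eq_mul, mul_one, mul_zero,
          Finset.sum_const_zero, add_zero, zero_add]
        push_cast
        ring
      by_cases hb1 : b = 1
      · subst hb1
        have t1 : ∑ x ∈ Finset.range (2 ^ (m + 1)), Sfun (m + 2) x 0 * Sfun (m + 2) x 1 =
            ∑ x ∈ Finset.range (2 ^ (m + 1)), (0:ℚ) :=
          Finset.sum_congr rfl fun x hx => by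
            rw [S1top m x (Finset.mem_range.mp hx)]; ring
        have t2 : ∑ x ∈ Finset.range (2 ^ (m + 1)),
            Sfun (m + 2) (2 ^ (m + 1) + x) 0 * Sfun (m + 2) (2 ^ (m + 1) + x) 1 =
            ∑ x ∈ Finset.range (2 ^ (m + 1)), (0:ℚ) :=
          Finset.sum_congr rfl fun x _ => by rw [S0bot m x]; ring
        rw [t1, t2, if_neg (by omega), if_pos (by norm_num)]
        simp
      by_cases hbii : b < 2 ^ (m + 2)
      · have hb2 : 2 ≤ b := by omega
        have t1 : ∑ x ∈ Finset.range (2 ^ (m + 1)), Sfun (m + 2) x 0 * Sfun (m + 2) x b =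
            ∑ x ∈ Finset.range (2 ^ (m + 1)), Sfun (m + 1) x (b - 2) :=
          Finset.sum_congr rfl fun x hx => by
            rw [S0top m x (Finset.mem_range.mp hx),
              SIItop m x b (Finset.mem_range.mp hx) hb2 hbii]; ring
        have t2 : ∑ x ∈ Finset.range (2 ^ (m + 1)),
            Sfun (m + 2) (2 ^ (m + 1) + x) 0 * Sfun (m + 2) (2 ^ (m + 1) + x) b =
            ∑ x ∈ Finset.range (2 ^ (m + 1)), (0:ℚ) :=
          Finset.sum_congr rfl fun x _ => by rw [S0bot m x]; ring
        rw [t1, t2, colsum m (b - 2) (by omega), if_neg (by omega), if_neg (by omega), ← hz1]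
        simp
      · have hbge : 2 ^ (m + 2) ≤ b := by omega
        have t1 : ∑ x ∈ Finset.range (2 ^ (m + 1)), Sfun (m + 2) x 0 * Sfun (m + 2) x b =
            ∑ x ∈ Finset.range (2 ^ (m + 1)), Sfun (m + 1) x (b - 2 ^ (m + 2)) :=
          Finset.sum_congr rfl fun x hx => by
            rw [S0top m x (Finset.mem_range.mp hx),
              SIIItop m x b (Finset.mem_range.mp hx) hbge]; ring
        have t2 : ∑ x ∈ Finset.range (2 ^ (m + 1)),
            Sfun (m + 2) (2 ^ (m + 1) + x) 0 * Sfun (m + 2) (2 ^ (m + 1) + x) b =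
            ∑ x ∈ Finset.range (2 ^ (m + 1)), (0:ℚ) :=
          Finset.sum_congr rfl fun x _ => by rw [S0bot m x]; ring
        rw [t1, t2, colsum m (b - 2 ^ (m + 2)) (by omega), if_neg (by omega),
          if_neg (by omega), ← hz1]
        simp
    by_cases ha1 : a = 1
    · subst ha1
      by_cases hb1 : b = 1
      · subst hb1
        have t1 : ∑ x ∈ Finset.range (2 ^ (m + 1)), Sfun (m + 2) x 1 * Sfun (m + 2) x 1 =
            ∑ x ∈ Finset.range (2 ^ (m + 1)), (0:ℚ) :=
          Finset.sum_congr rfl fun x hx => by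
            rw [S1top m x (Finset.mem_range.mp hx)]; ring
        have t2 : ∑ x ∈ Finset.range (2 ^ (m + 1)),
            Sfun (m + 2) (2 ^ (m + 1) + x) 1 * Sfun (m + 2) (2 ^ (m + 1) + x) 1 =
            ∑ x ∈ Finset.range (2 ^ (m + 1)), (1:ℚ) :=
          Finset.sum_congr rfl fun x _ => by rw [S1bot m x]; ring
        rw [t1, t2, if_pos rfl]
        simp only [Finset.sum_const, Finset.card_range, nsmul_eq_mul, mul_one, mul_zero,
          Finset.sum_const_zero, add_zero, zero_add]
        push_cast
        ring
      have hb2 : 2 ≤ b := by omega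
      by_cases hbii : b < 2 ^ (m + 2)
      · have t1 : ∑ x ∈ Finset.range (2 ^ (m + 1)), Sfun (m + 2) x 1 * Sfun (m + 2) x b =
            ∑ x ∈ Finset.range (2 ^ (m + 1)), (0:ℚ) :=
          Finset.sum_congr rfl fun x hx => by
            rw [S1top m x (Finset.mem_range.mp hx)]; ring
        have t2 : ∑ x ∈ Finset.range (2 ^ (m + 1)),
            Sfun (m + 2) (2 ^ (m + 1) + x) 1 * Sfun (m + 2) (2 ^ (m + 1) + x) b =
            ∑ x ∈ Finset.range (2 ^ (m + 1)), Sfun (m + 1) x (b - 2) :=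
          Finset.sum_congr rfl fun x hx => by
            rw [S1bot m x, SIIbot m x b (Finset.mem_range.mp hx) hb2 hbii]; ring
        rw [t1, t2, colsum m (b - 2) (by omega), if_neg (by omega), if_neg (by omega), ← hz1]
        simp
      · have hbge : 2 ^ (m + 2) ≤ b := by omega
        have t1 : ∑ x ∈ Finset.range (2 ^ (m + 1)), Sfun (m + 2) x 1 * Sfun (m + 2) x b =
            ∑ x ∈ Finset.range (2 ^ (m + 1)), (0:ℚ) :=
          Finset.sum_congr rfl fun x hx => by
            rw [S1top m x (Finset.mem_range.mp hx)]; ring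
        have t2 : ∑ x ∈ Finset.range (2 ^ (m + 1)),
            Sfun (m + 2) (2 ^ (m + 1) + x) 1 * Sfun (m + 2) (2 ^ (m + 1) + x) b =
            ∑ x ∈ Finset.range (2 ^ (m + 1)), Sfun (m + 1) x (pairFlip (b - 2 ^ (m + 2))) :=
          Finset.sum_congr rfl fun x hx => by
            rw [S1bot m x, SIIIbot m x b (Finset.mem_range.mp hx) hbge]; ring
        rw [t1, t2, colsum m (pairFlip (b - 2 ^ (m + 2))) (pf_lt hev (by omega)),
          if_neg (by omega), if_neg (by omega), ← hz1]
        simp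
    have ha2 : 2 ≤ a := by omega
    by_cases haii : a < 2 ^ (m + 2)
    · by_cases hbii : b < 2 ^ (m + 2)
      · -- both in B^(ii)
        have hb2 : 2 ≤ b := by omega
        have t1 : ∑ x ∈ Finset.range (2 ^ (m + 1)), Sfun (m + 2) x a * Sfun (m + 2) x b =
            ∑ x ∈ Finset.range (2 ^ (m + 1)), Sfun (m + 1) x (a - 2) * Sfun (m + 1) x (b - 2) :=
          Finset.sum_congr rfl fun x hx => by
            rw [SIItop m x a (Finset.mem_range.mp hx) ha2 haii,
              SIItop m x b (Finset.mem_range.mp hx) hb2 hbii]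
        have t2 : ∑ x ∈ Finset.range (2 ^ (m + 1)),
            Sfun (m + 2) (2 ^ (m + 1) + x) a * Sfun (m + 2) (2 ^ (m + 1) + x) b =
            ∑ x ∈ Finset.range (2 ^ (m + 1)), Sfun (m + 1) x (a - 2) * Sfun (m + 1) x (b - 2) :=
          Finset.sum_congr rfl fun x hx => by
            rw [SIIbot m x a (Finset.mem_range.mp hx) ha2 haii,
              SIIbot m x b (Finset.mem_range.mp hx) hb2 hbii]
        rw [t1, t2, ih (a - 2) (b - 2) (by omega) (by omega)]
        by_cases h1 : a = b
        · subst h1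
          rw [if_pos rfl, if_pos rfl, hzpow]
        · rw [if_neg (show ¬(a - 2 = b - 2) by omega), if_neg h1]
          by_cases h2 : a / 2 = b / 2
          · rw [if_pos (show (a - 2) / 2 = (b - 2) / 2 by omega), if_pos h2]
            ring
          · rw [if_neg (show ¬((a - 2) / 2 = (b - 2) / 2) by omega), if_neg h2, hz2]
      · -- a in B^(ii), b in B^(iii)
        have hbge : 2 ^ (m + 2) ≤ b := by omega
        have t1 : ∑ x ∈ Finset.range (2 ^ (m + 1)), Sfun (m + 2) x a * Sfun (m + 2) x b =
            ∑ x ∈ Finset.range (2 ^ (m + 1)),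
              Sfun (m + 1) x (a - 2) * Sfun (m + 1) x (b - 2 ^ (m + 2)) :=
          Finset.sum_congr rfl fun x hx => by
            rw [SIItop m x a (Finset.mem_range.mp hx) ha2 haii,
              SIIItop m x b (Finset.mem_range.mp hx) hbge]
        have t2 : ∑ x ∈ Finset.range (2 ^ (m + 1)),
            Sfun (m + 2) (2 ^ (m + 1) + x) a * Sfun (m + 2) (2 ^ (m + 1) + x) b =
            ∑ x ∈ Finset.range (2 ^ (m + 1)),
              Sfun (m + 1) x (a - 2) * Sfun (m + 1) x (pairFlip (b - 2 ^ (m + 2))) :=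
          Finset.sum_congr rfl fun x hx => by
            rw [SIIbot m x a (Finset.mem_range.mp hx) ha2 haii,
              SIIIbot m x b (Finset.mem_range.mp hx) hbge]
        rw [t1, t2, ih (a - 2) (b - 2 ^ (m + 2)) (by omega) (by omega),
          ih (a - 2) (pairFlip (b - 2 ^ (m + 2))) (by omega) (pf_lt hev (by omega))]
        rw [if_neg (show ¬(a = b) by omega), if_neg (show ¬(a / 2 = b / 2) by omega)]
        by_cases h1 : a - 2 = b - 2 ^ (m + 2)
        · rw [if_pos h1]
          have h2 : a - 2 ≠ pairFlip (b - 2 ^ (m + 2)) := by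
            intro h
            have := pf_lt hev (show b - 2 ^ (m + 2) < 2 ^ (m + 2) - 2 by omega)
            unfold pairFlip at h
            split at h <;> omega
          rw [if_neg h2, if_pos (show (a - 2) / 2 = pairFlip (b - 2 ^ (m + 2)) / 2 by
            rw [h1, pf_div]), ← hz1]
          ring
        · rw [if_neg h1]
          by_cases h2 : a - 2 = pairFlip (b - 2 ^ (m + 2))
          · rw [if_pos (show (a - 2) / 2 = (b - 2 ^ (m + 2)) / 2 by
                rw [h2, pf_div]), if_pos h2, ← hz1]
            ring
          · have h3 : ¬ ((a - 2) / 2 = (b - 2 ^ (m + 2)) / 2) := fun h => h2 (pf_pair h h1)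
            rw [if_neg h3, if_neg h2,
              if_neg (show ¬((a - 2) / 2 = pairFlip (b - 2 ^ (m + 2)) / 2) by
                rw [pf_div]; exact h3), hz2]
    · -- both in B^(iii)
      have hage : 2 ^ (m + 2) ≤ a := by omega
      have hbge : 2 ^ (m + 2) ≤ b := by omega
      have t1 : ∑ x ∈ Finset.range (2 ^ (m + 1)), Sfun (m + 2) x a * Sfun (m + 2) x b =
          ∑ x ∈ Finset.range (2 ^ (m + 1)),
            Sfun (m + 1) x (a - 2 ^ (m + 2)) * Sfun (m + 1) x (b - 2 ^ (m + 2)) :=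
        Finset.sum_congr rfl fun x hx => by
          rw [SIIItop m x a (Finset.mem_range.mp hx) hage,
            SIIItop m x b (Finset.mem_range.mp hx) hbge]
      have t2 : ∑ x ∈ Finset.range (2 ^ (m + 1)),
          Sfun (m + 2) (2 ^ (m + 1) + x) a * Sfun (m + 2) (2 ^ (m + 1) + x) b =
          ∑ x ∈ Finset.range (2 ^ (m + 1)),
            Sfun (m + 1) x (pairFlip (a - 2 ^ (m + 2))) *
              Sfun (m + 1) x (pairFlip (b - 2 ^ (m + 2))) :=
        Finset.sum_congr rfl fun x hx => by
          rw [SIIIbot m x a (Finset.mem_range.mp hx) hage,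
            SIIIbot m x b (Finset.mem_range.mp hx) hbge]
      rw [t1, t2, ih (a - 2 ^ (m + 2)) (b - 2 ^ (m + 2)) (by omega) (by omega),
        ih (pairFlip (a - 2 ^ (m + 2))) (pairFlip (b - 2 ^ (m + 2)))
          (pf_lt hev (by omega)) (pf_lt hev (by omega))]
      by_cases h1 : a = b
      · subst h1
        rw [if_pos rfl, if_pos rfl, if_pos rfl, hzpow]
      · have h1' : a - 2 ^ (m + 2) ≠ b - 2 ^ (m + 2) := by omega
        have h1'' : pairFlip (a - 2 ^ (m + 2)) ≠ pairFlip (b - 2 ^ (m + 2)) :=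
          fun h => h1' (pf_inj h)
        rw [if_neg h1', if_neg h1'', if_neg h1]
        by_cases h2 : a / 2 = b / 2
        · rw [if_pos (show (a - 2 ^ (m + 2)) / 2 = (b - 2 ^ (m + 2)) / 2 by omega),
            if_pos (show pairFlip (a - 2 ^ (m + 2)) / 2 = pairFlip (b - 2 ^ (m + 2)) / 2 by
              rw [pf_div, pf_div]; omega), if_pos h2]
          ring
        · rw [if_neg (show ¬((a - 2 ^ (m + 2)) / 2 = (b - 2 ^ (m + 2)) / 2) by omega),
            if_neg (show ¬(pairFlip (a - 2 ^ (m + 2)) / 2 = pairFlip (b - 2 ^ (m + 2)) / 2) by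
              rw [pf_div, pf_div]; omega), if_neg h2, hz2]

lemma matrix_entry_eq (m : ℕ) (a b : Fin (2 ^ (m + 1 + 1) - 2)) :
    ((S (m + 1))ᵀ * S (m + 1)) a b =
      if (a : ℕ) = b then (2:ℚ) ^ m else if (a : ℕ) / 2 = (b : ℕ) / 2 then 0
        else (2:ℚ) ^ ((m:ℤ) - 1) := by
  rw [Matrix.mul_apply]
  simp only [Matrix.transpose_apply, S, Matrix.of_apply]
  rw [Fin.sum_univ_eq_sum_range (fun x => Sfun (m + 1) x a * Sfun (m + 1) x b) (2 ^ (m + 1))]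
  exact key m a b a.isLt b.isLt

theorem stmt17 (r : ℕ) (hr : 1 ≤ r) :
    -- `G = Sᵀ S = 2^(r-2) (J + I_{c/2} ⊗ [[1,-1],[-1,1]])`
    (∀ a b : Fin (2 ^ (r + 1) - 2),
      ((S r)ᵀ * S r) a b =
        (2 : ℚ) ^ ((r : ℤ) - 2) *
          (1 + if a = b then 1 else
            if (a : ℕ) / 2 = (b : ℕ) / 2 then -1 else 0)) ∧
    -- each column of `S_r` has exactly `2^(r-1)` ones
    (∀ b : Fin (2 ^ (r + 1) - 2),
      ({a : Fin (2 ^ r) | S r a b = 1} : Finset _).card = 2 ^ (r - 1)) ∧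
    -- inner products of distinct columns
    (∀ a b : Fin (2 ^ (r + 1) - 2), a ≠ b →
      ((S r)ᵀ * S r) a b =
        if (a : ℕ) / 2 = (b : ℕ) / 2 then 0 else (2 : ℚ) ^ ((r : ℤ) - 2)) := by
  obtain ⟨m, rfl⟩ : ∃ m, r = m + 1 := ⟨r - 1, by omega⟩
  have hze : (((m + 1 : ℕ)) : ℤ) - 2 = (m : ℤ) - 1 := by push_cast; ring
  have hzz : (2:ℚ) ^ (((m + 1 : ℕ) : ℤ) - 2) = (2:ℚ) ^ ((m:ℤ) - 1) := by rw [hze]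
  have hzm : (2:ℚ) ^ ((m:ℤ) - 1) * 2 = (2:ℚ) ^ m := by
    rw [zpow_sub₀ (by norm_num : (2:ℚ) ≠ 0), zpow_natCast, zpow_one]
    field_simp
  refine ⟨?_, ?_, ?_⟩
  · intro a b
    rw [matrix_entry_eq m a b, hzz]
    by_cases h1 : a = b
    · rw [if_pos (by rw [h1]), if_pos h1, ← hzm]
      ring
    · have h1' : (a : ℕ) ≠ (b : ℕ) := fun h => h1 (Fin.ext h)
      rw [if_neg h1', if_neg h1]
      by_cases h2 : (a : ℕ) / 2 = (b : ℕ) / 2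
      · rw [if_pos h2, if_pos h2]
        ring
      · rw [if_neg h2, if_neg h2]
        ring
  · intro b
    classical
    have e1 : ({a : Fin (2 ^ (m + 1)) | S (m + 1) a b = 1} : Finset _) =
        Finset.univ.filter (fun a => S (m + 1) a b = 1) := by
      ext x
      simp [Set.mem_toFinset]
    have e2 : (((Finset.univ.filter
          (fun a : Fin (2 ^ (m + 1)) => S (m + 1) a b = 1)).card : ℕ) : ℚ) =
        ∑ x : Fin (2 ^ (m + 1)), if S (m + 1) x b = 1 then (1:ℚ) else 0 := by
      rw [Finset.card_filter]
      push_cast [apply_ite (fun n : ℕ => (n : ℚ))]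
      rfl
    have e3 : (∑ x : Fin (2 ^ (m + 1)), if S (m + 1) x b = 1 then (1:ℚ) else 0) =
        ∑ x : Fin (2 ^ (m + 1)), Sfun (m + 1) x b * Sfun (m + 1) x b := by
      refine Finset.sum_congr rfl fun x _ => ?_
      rcases Sfun_zero_or_one (m + 1) x b with h | h
      · rw [if_neg (by rw [show S (m + 1) x b = Sfun (m + 1) x b from rfl, h]; norm_num), h]
        ring
      · rw [if_pos (by rw [show S (m + 1) x b = Sfun (m + 1) x b from rfl, h]), h]
        ring
    have e4 : (∑ x : Fin (2 ^ (m + 1)), Sfun (m + 1) x b * Sfun (m + 1) x b) = (2:ℚ) ^ m := by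
      rw [Fin.sum_univ_eq_sum_range (fun x => Sfun (m + 1) x b * Sfun (m + 1) x b) (2 ^ (m + 1))]
      rw [key m b b b.isLt b.isLt, if_pos rfl]
    have : (((Finset.univ.filter
          (fun a : Fin (2 ^ (m + 1)) => S (m + 1) a b = 1)).card : ℕ) : ℚ) = ((2 ^ m : ℕ) : ℚ) := by
      rw [e2, e3, e4]
      push_cast
      ring
    have hcard : (Finset.univ.filter
        (fun a : Fin (2 ^ (m + 1)) => S (m + 1) a b = 1)).card = 2 ^ m := Nat.cast_injective this
    rw [e1, hcard]
    norm_num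
  · intro a b hab
    rw [matrix_entry_eq m a b, if_neg (fun h => hab (Fin.ext h)), hzz]
end
end

section
/- Let r ≥ 1, with r even if 𝔽 = ℝ, and set m = 2^r. If {B_k}_{k∈K} is a maximal collection of mutually unbiased bases of 𝔽^m, so |K| = k_𝔽(m), then the family F = { P_J^{(k)} : k ∈ K, J ∈ 𝕊_r }, where P_J^{(k)} is the J-coordinate projection with respect to B_k and 𝕊_r is the block collection determined by the columns of S_r, is a tight maximal orthoplectic fusion frame: F consists of n = 2·d_𝔽(m) orthogonal projections of rank m/2 on 𝔽^m, the projections sum to a positive multiple of the identity, and tr(P P') ≤ m/4 for every pair of distinct projections P, P' in F, with max over distinct pairs equal to m/4 = (m/2)²/m. -/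
open Matrix

noncomputable section

variable {𝕜 : Type*} [RCLike 𝕜]

/-- the block determined by the `b`-th column of `S_r` -/
def blockOf (r : ℕ) (b : Fin (2 ^ (r + 1) - 2)) : Finset (Fin (2 ^ r)) :=
  {a : Fin (2 ^ r) | S r a b = 1}


/-!
The blocks of `𝕊_r` come in complementary pairs (columns `b` and `pairFlip b`), each block has
`m/2` elements and two distinct blocks share at most `m/4` elements; all three facts follow by
induction along the recursive definition of `S_r`, since a column of `S_{r+1}` stacks a column
(or a constant column) of `S_r` on top of the same column or of its complementary partner.
In particular every point lies in exactly `m - 1` blocks, one from each complementary pair.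

The trace `tr(P_J P'_J')` is the sum of the `|⟨b_j, b'_j'⟩|²` over `J × J'`: this is
`|J ∩ J'| ≤ m/4` within one basis and `|J| |J'| / m = m/4` across two unbiased bases.
Summing the `P_J` of one basis over all blocks gives `(m - 1) I`.
-/

open Finset

section CoordProj

variable {ι n : Type*} [Fintype n]

def coordProj (v : ι → n → 𝕜) (J : Finset ι) : Matrix n n 𝕜 :=
  ∑ j ∈ J, vecMulVec (v j) (star (v j))

omit [Fintype n] in
lemma coordProj_isHermitian (v : ι → n → 𝕜) (J : Finset ι) :
    (coordProj v J).IsHermitian := by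
  simp [coordProj, IsHermitian, conjTranspose_sum]

omit [Fintype n] in
lemma coordProj_eq_coordProj_univ (v : ι → n → 𝕜) (J : Finset ι) :
    coordProj v J = coordProj (fun j : J => v j) univ := by
  simp only [coordProj, univ_eq_attach, sum_attach J (fun j => vecMulVec (v j) (star (v j)))]

omit [Fintype n] in
lemma coordProj_univ_eq_mul_conjTranspose [Fintype ι] (v : ι → n → 𝕜) :
    coordProj v univ = (of v)ᵀ * (of v)ᵀᴴ := by
  ext x y
  simp [coordProj, Matrix.sum_apply, vecMulVec_apply, mul_apply]

lemma re_trace_coordProj_mul (v w : ι → n → 𝕜) (J J' : Finset ι) :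
    RCLike.re (coordProj v J * coordProj w J').trace =
      ∑ i ∈ J, ∑ j ∈ J', ‖star (v i) ⬝ᵥ w j‖ ^ 2 := by
  have h : ∀ i j, (vecMulVec (v i) (star (v i)) * vecMulVec (w j) (star (w j))).trace =
      (star (v i) ⬝ᵥ w j) * star (star (v i) ⬝ᵥ w j) := by
    intro i j
    rw [vecMulVec_mul_vecMulVec, trace_vecMulVec, dotProduct_smul, smul_eq_mul, star_dotProduct,
      star_star, dotProduct_comm]
  simp only [coordProj, sum_mul_sum, trace_sum, map_sum, h, RCLike.star_def, RCLike.mul_conj]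
  norm_cast

lemma re_trace_coordProj_mul_of_unbiased {v w : ι → n → 𝕜} {c : ℝ}
    (hvw : ∀ i j, ‖star (v i) ⬝ᵥ w j‖ ^ 2 = c) (J J' : Finset ι) :
    RCLike.re (coordProj v J * coordProj w J').trace = #J * #J' * c := by
  simp [re_trace_coordProj_mul, hvw, mul_assoc]

variable [DecidableEq ι] {v : ι → n → 𝕜}
  (hv : ∀ i j, star (v i) ⬝ᵥ v j = if i = j then 1 else 0)
include hv

lemma conjTranspose_mul_self_eq_one [Fintype ι] : (of v)ᵀᴴ * (of v)ᵀ = 1 := by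
  ext i j
  simp only [mul_apply, conjTranspose_apply, transpose_apply, of_apply, one_apply]
  exact hv i j

lemma coordProj_mul_self (J : Finset ι) : coordProj v J * coordProj v J = coordProj v J := by
  simp only [coordProj, sum_mul_sum, vecMulVec_mul_vecMulVec, hv, ite_smul, one_smul, zero_smul]
  refine sum_congr rfl fun i hi => ?_
  simp [hi, apply_ite (vecMulVec (v i))]

lemma re_trace_coordProj_mul_self (J J' : Finset ι) :
    RCLike.re (coordProj v J * coordProj v J').trace = #(J ∩ J') := by
  simp only [re_trace_coordProj_mul, hv, apply_ite (‖·‖ ^ 2), norm_one, norm_zero, one_pow,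
    zero_pow two_ne_zero, sum_ite_eq, ← sum_filter, sum_const, nsmul_one, filter_mem_eq_inter]

open scoped ComplexOrder in
lemma rank_coordProj (J : Finset ι) : (coordProj v J).rank = #J := by
  have hJ : (of fun j : J => v j)ᵀᴴ * (of fun j : J => v j)ᵀ = 1 :=
    conjTranspose_mul_self_eq_one fun i j => by rw [hv]; simp only [Subtype.ext_iff]
  rw [coordProj_eq_coordProj_univ, coordProj_univ_eq_mul_conjTranspose,
    rank_self_mul_conjTranspose, ← rank_conjTranspose_mul_self, hJ, rank_one, Fintype.card_coe]

end CoordProj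

section OrthonormalBasis

variable {n : Type*} [Fintype n] [DecidableEq n] {v : n → n → 𝕜}
  (hv : ∀ i j, star (v i) ⬝ᵥ v j = if i = j then 1 else 0)
include hv

lemma coordProj_univ : coordProj v univ = 1 := by
  rw [coordProj_univ_eq_mul_conjTranspose, mul_eq_one_comm.mp (conjTranspose_mul_self_eq_one hv)]

lemma sum_coordProj_of_forall_card {β : Type*} [Fintype β] (B : β → Finset n) (c : ℕ)
    (hB : ∀ j, #{b | j ∈ B b} = c) : ∑ b, coordProj v (B b) = c • 1 := by
  rw [← coordProj_univ hv, coordProj, smul_sum]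
  simp only [coordProj]
  rw [sum_comm' (s' := fun j => ({b | j ∈ B b} : Finset β)) (t' := univ) (by simp)]
  simp [hB]

end OrthonormalBasis

section Blocks

lemma pairFlip_pairFlip (j : ℕ) : pairFlip (pairFlip j) = j := by
  unfold pairFlip; split_ifs <;> omega

lemma pairFlip_injective : Function.Injective pairFlip :=
  Function.LeftInverse.injective pairFlip_pairFlip

lemma pairFlip_lt {j N : ℕ} (hN : Even N) (hj : j < N) : pairFlip j < N := by
  obtain ⟨t, rfl⟩ := hN
  unfold pairFlip; split_ifs <;> omega

lemma pairFlip_add {j k : ℕ} (hk : Even k) : pairFlip (j + k) = pairFlip j + k := by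
  obtain ⟨t, rfl⟩ := hk
  unfold pairFlip; split_ifs <;> omega

lemma even_two_pow_sub_two (n : ℕ) : Even (2 ^ (n + 1) - 2) := by
  rw [pow_succ, ← Nat.sub_one_mul, mul_comm]; exact even_two_mul _

def colS (r b : ℕ) : Finset ℕ := {a ∈ range (2 ^ r) | Sfun r a b = 1}

lemma colS_subset (r b : ℕ) : colS r b ⊆ range (2 ^ r) := filter_subset _ _

lemma colS_one (b : ℕ) : colS 1 b = {a ∈ range 2 | a = b} := by
  simp [colS, Sfun]

def vstack (N : ℕ) (X Y : Finset ℕ) : Finset ℕ :=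
  {a ∈ range (2 * N) | if a < N then a ∈ X else a - N ∈ Y}

lemma vstack_inter (N : ℕ) (X Y X' Y' : Finset ℕ) :
    vstack N X Y ∩ vstack N X' Y' = vstack N (X ∩ X') (Y ∩ Y') := by
  ext a; simp only [vstack, mem_inter, mem_filter]; split_ifs <;> tauto

lemma range_sdiff_vstack (N : ℕ) (X Y : Finset ℕ) :
    range (2 * N) \ vstack N X Y = vstack N (range N \ X) (range N \ Y) := by
  ext a
  simp only [vstack, mem_sdiff, mem_filter, mem_range]
  split_ifs with h
  · have : a < 2 * N := by omega
    tauto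
  · have : a - N < N ↔ a < 2 * N := by omega
    tauto

lemma card_vstack {N : ℕ} {X Y : Finset ℕ} (hX : X ⊆ range N) (hY : Y ⊆ range N) :
    #(vstack N X Y) = #X + #Y := by
  have h : vstack N X Y = X ∪ Y.map (addLeftEmbedding N) := by
    ext a
    simp only [vstack, mem_filter, mem_range, mem_union, mem_map, addLeftEmbedding_apply]
    constructor
    · rintro ⟨-, h⟩
      split_ifs at h with ha
      · exact Or.inl h
      · exact Or.inr ⟨a - N, h, by omega⟩
    · rintro (h | ⟨c, hc, rfl⟩)
      · have := mem_range.mp (hX h); simp [h, this]; omega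
      · have := mem_range.mp (hY hc); simp [hc]; omega
  rw [h, card_union_of_disjoint, card_map]
  refine disjoint_left.mpr fun a ha hmap => ?_
  obtain ⟨c, -, rfl⟩ := mem_map.mp hmap
  have := mem_range.mp (hX ha)
  simp at this

/-- The upper and lower halves of column `b` of `S_{n+2}`, read off from `B^(i)`, `B^(ii)` and
`B^(iii)` in turn. -/
def colHalves (n b : ℕ) : Finset ℕ × Finset ℕ :=
  if b = 0 then (range (2 ^ (n + 1)), ∅)
  else if b = 1 then (∅, range (2 ^ (n + 1)))
  else if b < 2 ^ (n + 2) then (colS (n + 1) (b - 2), colS (n + 1) (b - 2))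
  else (colS (n + 1) (b - 2 ^ (n + 2)), colS (n + 1) (pairFlip (b - 2 ^ (n + 2))))

lemma colS_add_two (n b : ℕ) :
    colS (n + 2) b = vstack (2 ^ (n + 1)) (colHalves n b).1 (colHalves n b).2 := by
  have h2 : 2 ^ (n + 2) = 2 * 2 ^ (n + 1) := pow_succ' 2 (n + 1)
  ext a
  simp only [colS, vstack, mem_filter, mem_range, ← h2]
  rw [Sfun]
  by_cases ha : a < 2 ^ (n + 1)
  · have hmod : a % 2 ^ (n + 1) = a := Nat.mod_eq_of_lt ha
    unfold colHalves
    split_ifs <;> simp [colS, ha, hmod]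
  · by_cases ha' : a < 2 ^ (n + 2)
    · have hmod : a % 2 ^ (n + 1) = a - 2 ^ (n + 1) := by
        rw [Nat.mod_eq_sub_mod (by omega), Nat.mod_eq_of_lt (by omega)]
      unfold colHalves
      split_ifs <;> simp [colS, hmod] <;> omega
    · simp [ha']

lemma colHalves_zero (n : ℕ) : colHalves n 0 = (range (2 ^ (n + 1)), ∅) := by simp [colHalves]

lemma colHalves_one (n : ℕ) : colHalves n 1 = (∅, range (2 ^ (n + 1))) := by simp [colHalves]

lemma colHalves_add_two {n d : ℕ} (hd : d < 2 ^ (n + 2) - 2) :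
    colHalves n (d + 2) = (colS (n + 1) d, colS (n + 1) d) := by
  simp [colHalves, show d + 2 < 2 ^ (n + 2) by omega]

lemma colHalves_add_two_pow (n d : ℕ) :
    colHalves n (d + 2 ^ (n + 2)) = (colS (n + 1) d, colS (n + 1) (pairFlip d)) := by
  have : 2 ≤ 2 ^ (n + 2) := Nat.le_self_pow (by omega) 2
  simp [colHalves, show d + 2 ^ (n + 2) ≠ 1 by omega]

lemma colHalves_subset (n b : ℕ) :
    (colHalves n b).1 ⊆ range (2 ^ (n + 1)) ∧ (colHalves n b).2 ⊆ range (2 ^ (n + 1)) := by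
  unfold colHalves; split_ifs <;> simp [colS_subset]

lemma lt_two_pow_sub_two_cases {n b : ℕ} (hb : b < 2 ^ (n + 3) - 2) :
    b = 0 ∨ b = 1 ∨ (∃ d < 2 ^ (n + 2) - 2, b = d + 2) ∨
      ∃ d < 2 ^ (n + 2) - 2, b = d + 2 ^ (n + 2) := by
  have h : 2 ^ (n + 3) = 2 * 2 ^ (n + 2) := pow_succ' 2 (n + 2)
  have : 2 ≤ 2 ^ (n + 2) := Nat.le_self_pow (by omega) 2
  by_cases hb2 : b < 2 ^ (n + 2)
  · rcases b with _ | _ | d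
    · exact Or.inl rfl
    · exact Or.inr (Or.inl rfl)
    · exact Or.inr (Or.inr (Or.inl ⟨d, by omega, rfl⟩))
  · exact Or.inr (Or.inr (Or.inr ⟨b - 2 ^ (n + 2), by omega, by omega⟩))

lemma card_colS (n b : ℕ) (hb : b < 2 ^ (n + 2) - 2) : #(colS (n + 1) b) = 2 ^ n := by
  induction n generalizing b with
  | zero =>
    simp [colS_one, filter_eq', show b < 2 by simpa using hb]
  | succ n ih =>
    have hsub := colHalves_subset n b
    rw [colS_add_two, card_vstack hsub.1 hsub.2, pow_succ]
    rcases lt_two_pow_sub_two_cases hb with rfl | rfl | ⟨d, hd, rfl⟩ | ⟨d, hd, rfl⟩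
    · simp [colHalves_zero, pow_succ]
    · simp [colHalves_one, pow_succ]
    · rw [colHalves_add_two hd, ih d hd]; ring
    · rw [colHalves_add_two_pow, ih d hd, ih _ (pairFlip_lt (even_two_pow_sub_two _) hd)]; ring

lemma colS_pairFlip (n b : ℕ) (hb : b < 2 ^ (n + 2) - 2) :
    colS (n + 1) (pairFlip b) = range (2 ^ (n + 1)) \ colS (n + 1) b := by
  induction n generalizing b with
  | zero =>
    have hb2 : b < 2 := by simpa using hb
    interval_cases b <;> decide
  | succ n ih =>
    have h2 : 2 ^ (n + 2) = 2 * 2 ^ (n + 1) := pow_succ' 2 (n + 1)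
    have heven := even_two_pow_sub_two (n + 1)
    rw [colS_add_two, colS_add_two, h2, range_sdiff_vstack]
    rcases lt_two_pow_sub_two_cases hb with rfl | rfl | ⟨d, hd, rfl⟩ | ⟨d, hd, rfl⟩
    · simp [show pairFlip 0 = 1 from rfl, colHalves_zero, colHalves_one]
    · simp [show pairFlip 1 = 0 from rfl, colHalves_zero, colHalves_one]
    · rw [pairFlip_add even_two, colHalves_add_two (pairFlip_lt heven hd), colHalves_add_two hd,
        ih d hd]
    · rw [pairFlip_add (by simp [pow_succ]), colHalves_add_two_pow, colHalves_add_two_pow,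
        pairFlip_pairFlip, ih d hd, Finset.sdiff_sdiff_eq_self (colS_subset _ _)]

lemma card_colS_inter_add_card_colS_inter_pairFlip (n : ℕ) {d d' : ℕ}
    (hd : d < 2 ^ (n + 2) - 2) (hd' : d' < 2 ^ (n + 2) - 2) :
    #(colS (n + 1) d ∩ colS (n + 1) d') + #(colS (n + 1) d ∩ colS (n + 1) (pairFlip d')) =
      2 ^ n := by
  rw [colS_pairFlip n d' hd', ← inter_sdiff_assoc, inter_eq_left.mpr (colS_subset _ _),
    card_inter_add_card_sdiff, card_colS n d hd]

lemma four_mul_card_colS_inter_le (n : ℕ) {b b' : ℕ} (hb : b < 2 ^ (n + 2) - 2)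
    (hb' : b' < 2 ^ (n + 2) - 2) (hne : b ≠ b') :
    4 * #(colS (n + 1) b ∩ colS (n + 1) b') ≤ 2 ^ (n + 1) := by
  induction n generalizing b b' with
  | zero =>
    have : colS 1 b ∩ colS 1 b' = ∅ := by
      ext a; simp only [colS_one, mem_inter, mem_filter, notMem_empty, iff_false]; omega
    simp [this]
  | succ n ih =>
    wlog hlt : b < b' generalizing b b'
    · rw [inter_comm]; exact this hb' hb hne.symm (by omega)
    have hsub := colHalves_subset n b
    rw [colS_add_two, colS_add_two, vstack_inter,
      card_vstack (inter_subset_left.trans hsub.1) (inter_subset_left.trans hsub.2)]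
    have hrange : ∀ d, range (2 ^ (n + 1)) ∩ colS (n + 1) d = colS (n + 1) d :=
      fun d => inter_eq_right.mpr (colS_subset _ _)
    have heven := even_two_pow_sub_two (n + 1)
    have h4 : 2 ^ (n + 1 + 1) = 4 * 2 ^ n := by ring
    rw [h4]
    rcases lt_two_pow_sub_two_cases hb with rfl | rfl | ⟨d, hd, rfl⟩ | ⟨d, hd, rfl⟩ <;>
      rcases lt_two_pow_sub_two_cases hb' with
        rfl | rfl | ⟨d', hd', rfl⟩ | ⟨d', hd', rfl⟩ <;>
      try omega
    -- the eight cases with `b < b'` remain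
    · simp [colHalves_zero, colHalves_one]
    · simp [colHalves_zero, colHalves_add_two hd', hrange, card_colS n d' hd']
    · simp [colHalves_zero, colHalves_add_two_pow, hrange, card_colS n d' hd']
    · simp [colHalves_one, colHalves_add_two hd', hrange, card_colS n d' hd']
    · simp [colHalves_one, colHalves_add_two_pow, hrange, card_colS n _ (pairFlip_lt heven hd')]
    · have := ih hd hd' (by omega)
      simp only [colHalves_add_two hd, colHalves_add_two hd']
      omega
    · simp only [colHalves_add_two hd, colHalves_add_two_pow,
        card_colS_inter_add_card_colS_inter_pairFlip n hd hd', le_refl]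
    · have h1 := ih hd hd' (by omega)
      have h2 := ih (pairFlip_lt heven hd) (pairFlip_lt heven hd')
        (pairFlip_injective.ne (by omega))
      simp only [colHalves_add_two_pow]
      omega

lemma mem_blockOf {r : ℕ} {b : Fin (2 ^ (r + 1) - 2)} {a : Fin (2 ^ r)} :
    a ∈ blockOf r b ↔ (a : ℕ) ∈ colS r b := by
  rw [blockOf, Finset.mem_filter]
  simp [S, colS]

lemma map_blockOf (r : ℕ) (b : Fin (2 ^ (r + 1) - 2)) :
    (blockOf r b).map Fin.valEmbedding = colS r b := by
  ext a
  simp only [mem_map, Fin.valEmbedding_apply, mem_blockOf]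
  constructor
  · rintro ⟨a, ha, rfl⟩; exact ha
  · intro ha; exact ⟨⟨a, mem_range.mp (colS_subset r b ha)⟩, ha, rfl⟩

lemma card_blockOf {r : ℕ} (hr : 1 ≤ r) (b : Fin (2 ^ (r + 1) - 2)) :
    #(blockOf r b) = 2 ^ (r - 1) := by
  obtain ⟨n, rfl⟩ : ∃ n, r = n + 1 := ⟨r - 1, by omega⟩
  rw [← card_map Fin.valEmbedding, map_blockOf, card_colS n b b.2, Nat.add_sub_cancel]

lemma four_mul_card_blockOf_inter_le {r : ℕ} (hr : 1 ≤ r) {b b' : Fin (2 ^ (r + 1) - 2)}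
    (h : b ≠ b') : 4 * #(blockOf r b ∩ blockOf r b') ≤ 2 ^ r := by
  obtain ⟨n, rfl⟩ : ∃ n, r = n + 1 := ⟨r - 1, by omega⟩
  rw [← card_map Fin.valEmbedding, map_inter, map_blockOf, map_blockOf]
  exact four_mul_card_colS_inter_le n b.2 b'.2 (Fin.val_injective.ne h)

lemma card_filter_mem_blockOf {r : ℕ} (hr : 1 ≤ r) (a : Fin (2 ^ r)) :
    #{b | a ∈ blockOf r b} = 2 ^ r - 1 := by
  obtain ⟨n, rfl⟩ : ∃ n, r = n + 1 := ⟨r - 1, by omega⟩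
  let flip (b : Fin (2 ^ (n + 2) - 2)) : Fin (2 ^ (n + 2) - 2) :=
    ⟨pairFlip b, pairFlip_lt (even_two_pow_sub_two _) b.2⟩
  have hflip (b) : a ∈ blockOf (n + 1) (flip b) ↔ a ∉ blockOf (n + 1) b := by
    simp [mem_blockOf, flip, colS_pairFlip n b b.2, a.2]
  have hinv (b) : flip (flip b) = b := Fin.ext (pairFlip_pairFlip b)
  have hhalf : #{b | a ∈ blockOf (n + 1) b} = #{b | a ∉ blockOf (n + 1) b} :=
    card_nbij' flip flip (fun b hb => by simpa [hflip] using hb)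
      (fun b hb => by simpa [← hflip] using hb) (fun b _ => hinv b) (fun b _ => hinv b)
  have htotal := card_filter_add_card_filter_not (s := univ) (fun b => a ∈ blockOf (n + 1) b)
  rw [card_univ, Fintype.card_fin, ← hhalf] at htotal
  have := pow_succ' 2 (n + 1)
  omega

end Blocks

section BlockProjections

variable {r : ℕ} (hr : 1 ≤ r) {n : Type*} [Fintype n]
include hr

lemma re_trace_coordProj_blockOf_of_unbiased {v w : Fin (2 ^ r) → n → 𝕜}
    (hvw : ∀ i j, ‖star (v i) ⬝ᵥ w j‖ ^ 2 = 1 / ((2 ^ r : ℕ) : ℝ))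
    (b b' : Fin (2 ^ (r + 1) - 2)) :
    RCLike.re (coordProj v (blockOf r b) * coordProj w (blockOf r b')).trace =
      ((2 ^ r : ℕ) : ℝ) / 4 := by
  obtain ⟨s, rfl⟩ : ∃ s, r = s + 1 := ⟨r - 1, by omega⟩
  rw [re_trace_coordProj_mul_of_unbiased hvw, card_blockOf hr, card_blockOf hr]
  push_cast
  field_simp
  ring

lemma re_trace_coordProj_blockOf_le {v : Fin (2 ^ r) → n → 𝕜}
    (hv : ∀ i j, star (v i) ⬝ᵥ v j = if i = j then 1 else 0)
    {b b' : Fin (2 ^ (r + 1) - 2)} (h : b ≠ b') :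
    RCLike.re (coordProj v (blockOf r b) * coordProj v (blockOf r b')).trace ≤
      ((2 ^ r : ℕ) : ℝ) / 4 := by
  rw [re_trace_coordProj_mul_self hv, le_div_iff₀ (by norm_num)]
  have := four_mul_card_blockOf_inter_le hr h
  exact_mod_cast (by omega : #(blockOf r b ∩ blockOf r b') * 4 ≤ 2 ^ r)

omit [Fintype n] in
lemma sum_coordProj_blockOf {v : Fin (2 ^ r) → Fin (2 ^ r) → 𝕜}
    (hv : ∀ i j, star (v i) ⬝ᵥ v j = if i = j then 1 else 0) :
    ∑ b, coordProj v (blockOf r b) = (2 ^ r - 1) • 1 :=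
  sum_coordProj_of_forall_card hv _ _ (card_filter_mem_blockOf hr)

end BlockProjections

lemma one_lt_of_cast_eq_ite {c m : ℕ} (hm : 2 ≤ m)
    (hc : (c : ℝ) = if (RCLike.I : 𝕜) = 0 then (m : ℝ) / 2 + 1 else (m : ℝ) + 1) :
    1 < c := by
  have : (2 : ℝ) ≤ m := by exact_mod_cast hm
  have : (1 : ℝ) < c := by rw [hc]; split_ifs <;> linarith
  exact_mod_cast this

lemma card_mul_eq_two_mul_dF {c m : ℕ} (hm : Even m)
    (hc : (c : ℝ) = if (RCLike.I : 𝕜) = 0 then (m : ℝ) / 2 + 1 else (m : ℝ) + 1) :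
    c * (2 * m - 2) = 2 * dF 𝕜 m := by
  unfold dF
  split_ifs at hc ⊢
  · obtain ⟨t, rfl⟩ := hm
    have hct : c = t + 1 := by push_cast at hc; exact_mod_cast (by linarith : (c : ℝ) = t + 1)
    rw [hct, show 2 * (t + t) - 2 = 2 * (t + t - 1) by omega,
      show (t + t + 2) * (t + t - 1) = 2 * ((t + 1) * (t + t - 1)) by ring,
      Nat.mul_div_cancel_left _ two_pos]
    ring
  · have hcm : c = m + 1 := by exact_mod_cast hc
    subst hcm
    rcases Nat.eq_zero_or_pos m with rfl | hm0
    · rfl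
    · have : 1 ≤ m ^ 2 := Nat.one_le_pow _ _ hm0
      zify [this, (by omega : 2 ≤ 2 * m)]
      ring

open scoped Classical in
theorem stmt19_general (r : ℕ) (hr : 1 ≤ r)
    -- a maximal collection of mutually unbiased bases of `𝕜^m`, `m = 2^r`
    {K : Type*} [Fintype K]
    (b : K → Fin (2 ^ r) → (Fin (2 ^ r) → 𝕜))
    (horth : ∀ k, ∀ j j' : Fin (2 ^ r),
      star (b k j) ⬝ᵥ b k j' = if j = j' then 1 else 0)
    (hmub : ∀ k k' : K, k ≠ k' → ∀ j j' : Fin (2 ^ r),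
      ‖star (b k j) ⬝ᵥ b k' j'‖ ^ 2 = 1 / ((2 ^ r : ℕ) : ℝ))
    (hcard : (Fintype.card K : ℝ) =
      if (RCLike.I : 𝕜) = 0 then ((2 ^ r : ℕ) : ℝ) / 2 + 1 else ((2 ^ r : ℕ) : ℝ) + 1)
    -- the family of coordinate projections over the blocks of `𝕊_r`
    (P : K × Fin (2 ^ (r + 1) - 2) → Matrix (Fin (2 ^ r)) (Fin (2 ^ r)) 𝕜)
    (hP : ∀ p, P p = ∑ j ∈ blockOf r p.2, vecMulVec (b p.1 j) (star (b p.1 j))) :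
    -- `F` is a family of orthogonal projections of rank `m/2`,
    (∀ p, (P p).IsHermitian ∧ P p * P p = P p ∧ (P p).rank = 2 ^ (r - 1)) ∧
    -- consisting of `n = 2·d_𝔽(m)` members,
    Fintype.card (K × Fin (2 ^ (r + 1) - 2)) = 2 * dF 𝕜 (2 ^ r) ∧
    -- which is tight: the projections sum to a positive multiple of the identity,
    (∃ A : ℝ, 0 < A ∧
      ∑ p, P p = ((A : ℝ) : 𝕜) • (1 : Matrix (Fin (2 ^ r)) (Fin (2 ^ r)) 𝕜)) ∧
    -- and is maximal orthoplectic: `tr(P P') ≤ m/4` for distinct members, with equality attained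
    (∀ p q, p ≠ q →
      RCLike.re ((P p * P q).trace) ≤ ((2 ^ r : ℕ) : ℝ) / 4) ∧
    (∃ p q, p ≠ q ∧
      RCLike.re ((P p * P q).trace) = ((2 ^ r : ℕ) : ℝ) / 4) := by
  replace hP : ∀ p, P p = coordProj (b p.1) (blockOf r p.2) := hP
  have hm : 2 ^ r = 2 * 2 ^ (r - 1) := by rw [← pow_succ']; congr 1; omega
  have h2 : 2 ≤ 2 ^ r := Nat.le_self_pow (by omega) 2
  have hK : 1 < Fintype.card K := one_lt_of_cast_eq_ite h2 hcard
  have hunbiased (p q : K × Fin (2 ^ (r + 1) - 2)) (h : p.1 ≠ q.1) :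
      RCLike.re (P p * P q).trace = ((2 ^ r : ℕ) : ℝ) / 4 := by
    rw [hP, hP]; exact re_trace_coordProj_blockOf_of_unbiased hr (hmub _ _ h) _ _
  refine ⟨fun p => ?_, ?_, ?_, fun p q hpq => ?_, ?_⟩
  · rw [hP]
    exact ⟨coordProj_isHermitian _ _, coordProj_mul_self (horth _) _,
      (rank_coordProj (horth _) _).trans (card_blockOf hr _)⟩
  · rw [Fintype.card_prod, Fintype.card_fin, pow_succ']
    exact card_mul_eq_two_mul_dF (hm ▸ even_two_mul _) hcard
  · refine ⟨((Fintype.card K * (2 ^ r - 1) : ℕ) : ℝ), ?_, ?_⟩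
    · exact_mod_cast Nat.mul_pos (by omega) (by omega)
    · simp only [hP, Fintype.sum_prod_type, sum_coordProj_blockOf hr (horth _), sum_const,
        card_univ, smul_smul, RCLike.ofReal_natCast, Nat.cast_smul_eq_nsmul]
  · by_cases h : p.1 = q.1
    · rw [hP, hP, h]
      exact re_trace_coordProj_blockOf_le hr (horth _) fun h' => hpq (Prod.ext h h')
    · exact (hunbiased p q h).le
  · obtain ⟨k, k', hkk'⟩ := Fintype.exists_pair_of_one_lt_card hK
    have hcol : 0 < 2 ^ (r + 1) - 2 := by rw [pow_succ]; omega
    exact ⟨(k, ⟨0, hcol⟩), (k', ⟨0, hcol⟩), by simp [hkk'], hunbiased _ _ hkk'⟩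

open scoped Classical in
theorem stmt19 (r : ℕ) (hr : 1 ≤ r)
    -- in the real case `r` must be even
    (hreal : (RCLike.I : 𝕜) = 0 → Even r)
    -- a maximal collection of mutually unbiased bases of `𝕜^m`, `m = 2^r`
    {K : Type*} [Fintype K]
    (b : K → Fin (2 ^ r) → (Fin (2 ^ r) → 𝕜))
    (horth : ∀ k, ∀ j j' : Fin (2 ^ r),
      star (b k j) ⬝ᵥ b k j' = if j = j' then 1 else 0)
    (hmub : ∀ k k' : K, k ≠ k' → ∀ j j' : Fin (2 ^ r),
      ‖star (b k j) ⬝ᵥ b k' j'‖ ^ 2 = 1 / ((2 ^ r : ℕ) : ℝ))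
    (hcard : (Fintype.card K : ℝ) =
      if (RCLike.I : 𝕜) = 0 then ((2 ^ r : ℕ) : ℝ) / 2 + 1 else ((2 ^ r : ℕ) : ℝ) + 1)
    -- the family of coordinate projections over the blocks of `𝕊_r`
    (P : K × Fin (2 ^ (r + 1) - 2) → Matrix (Fin (2 ^ r)) (Fin (2 ^ r)) 𝕜)
    (hP : ∀ p, P p = ∑ j ∈ blockOf r p.2, vecMulVec (b p.1 j) (star (b p.1 j))) :
    -- `F` is a family of orthogonal projections of rank `m/2`,
    (∀ p, (P p).IsHermitian ∧ P p * P p = P p ∧ (P p).rank = 2 ^ (r - 1)) ∧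
    -- consisting of `n = 2·d_𝔽(m)` members,
    Fintype.card (K × Fin (2 ^ (r + 1) - 2)) = 2 * dF 𝕜 (2 ^ r) ∧
    -- which is tight: the projections sum to a positive multiple of the identity,
    (∃ A : ℝ, 0 < A ∧
      ∑ p, P p = ((A : ℝ) : 𝕜) • (1 : Matrix (Fin (2 ^ r)) (Fin (2 ^ r)) 𝕜)) ∧
    -- and is maximal orthoplectic: `tr(P P') ≤ m/4` for distinct members, with equality attained
    (∀ p q, p ≠ q →
      RCLike.re ((P p * P q).trace) ≤ ((2 ^ r : ℕ) : ℝ) / 4) ∧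
    (∃ p q, p ≠ q ∧
      RCLike.re ((P p * P q).trace) = ((2 ^ r : ℕ) : ℝ) / 4) :=
  stmt19_general r hr b horth hmub hcard P hP
end
end
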